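/- arXiv:1306.0056 — 12 statements merged into one kernel-verified Lean document; each statement's English description precedes it below -/
import Mathlib

section
/- Let p be a prime and H a finite p-group that is not elementary abelian (i.e., H is not both abelian and of exponent dividing p). Let Z_p(H) be the subgroup of the center of H consisting of the elements x with x^p = 1, and let H/p denote the quotient of H by the normal subgroup generated by all commutators and all p-th powers (the maximal elementary abelian p-quotient). Then the composite homomorphism Z_p(H) → H → H/p has nontrivial kernel. -/
open scoped commutatorElement

/-! The kernel is the intersection of `Z_p(H)` with the normal closure `N` of the commutators
and `p`-th powers. Since `H` is not elementary abelian, `N` is nontrivial; a nontrivial normal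
subgroup of a finite `p`-group meets the center nontrivially, and Cauchy's theorem yields an
element of order `p` in that intersection. -/

theorem Subgroup.normalClosure_commutators_and_powers_eq_bot_iff {G : Type*} [Group G] (n : ℕ) :
    normalClosure {y : G | (∃ a b : G, y = ⁅a, b⁆) ∨ ∃ a : G, y = a ^ n} = ⊥ ↔
      (∀ a b : G, a * b = b * a) ∧ ∀ x : G, x ^ n = 1 := by
  simp only [normalClosure_eq_bot_iff, Set.subset_def, Set.mem_ofPred_eq, Set.mem_singleton_iff]
  constructor
  · intro h
    exact ⟨fun a b => commutatorElement_eq_one_iff_mul_comm.mp (h _ (Or.inl ⟨a, b, rfl⟩)),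
      fun x => h _ (Or.inr ⟨x, rfl⟩)⟩
  · rintro ⟨hcomm, hpow⟩ y (⟨a, b, rfl⟩ | ⟨a, rfl⟩)
    · exact commutatorElement_eq_one_iff_mul_comm.mpr (hcomm a b)
    · exact hpow a

namespace IsPGroup

variable {p : ℕ} [Fact p.Prime] {G : Type*} [Group G] [Finite G]

theorem dvd_card_of_ne_bot (hG : IsPGroup p G) {K : Subgroup G} (hK : K ≠ ⊥) :
    p ∣ Nat.card K := by
  have : Nontrivial K := K.nontrivial_iff_ne_bot.mpr hK
  obtain ⟨k, hk0, hk⟩ := (hG.to_subgroup K).nontrivial_iff_card.mp this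
  exact hk ▸ dvd_pow_self p hk0.ne'

/-- Counting fixed points of the conjugation action of `G` on `N` modulo `p`: besides `1`
there is another one, i.e. a nontrivial central element of `N`. -/
theorem inf_center_ne_bot_of_normal (hG : IsPGroup p G) {N : Subgroup G} [N.Normal]
    (hN : N ≠ ⊥) : N ⊓ Subgroup.center G ≠ ⊥ := by
  have hone : (1 : N) ∈ MulAction.fixedPoints (ConjAct G) N := fun _ => by simp
  obtain ⟨⟨z, hzN⟩, hzfix, hz1⟩ :=
    (hG.of_equiv ConjAct.toConjAct).exists_fixed_point_of_prime_dvd_card_of_fixed_point (α := N)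
      (hG.dvd_card_of_ne_bot hN) hone
  have hz : z ∈ Subgroup.center G := by
    rw [← SetLike.mem_coe, ← ConjAct.fixedPoints_eq_center]
    intro g
    simpa [Subtype.ext_iff, ConjAct.Subgroup.val_conj_smul] using hzfix g
  exact Subgroup.ne_bot_iff_exists_ne_one.mpr
    ⟨⟨z, hzN, hz⟩, fun h => hz1 (Subtype.ext (congrArg Subtype.val h).symm)⟩

theorem exists_mem_center_orderOf_eq_of_normal (hG : IsPGroup p G) {N : Subgroup G} [N.Normal]
    (hN : N ≠ ⊥) : ∃ x ∈ N, x ∈ Subgroup.center G ∧ orderOf x = p := by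
  obtain ⟨⟨x, hxN, hxZ⟩, hx⟩ :=
    exists_prime_orderOf_dvd_card' p (hG.dvd_card_of_ne_bot (hG.inf_center_ne_bot_of_normal hN))
  exact ⟨x, hxN, hxZ, (Subgroup.orderOf_mk x _).symm.trans hx⟩

end IsPGroup

/-- Let `p` be a prime and `H` a finite `p`-group that is not
elementary abelian.  Then the composite `Z_p(H) → H → H/p` has nontrivial kernel,
where `Z_p(H) = {x ∈ center H | x ^ p = 1}` and `H/p` is the quotient of `H` by the
normal subgroup generated by all commutators and all `p`-th powers. -/
theorem stmt0 (p : ℕ) (hp : p.Prime) (H : Type*) [Group H] [Fintype H]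
    (hH : IsPGroup p H)
    (hne : ¬ ((∀ a b : H, a * b = b * a) ∧ ∀ x : H, x ^ p = 1)) :
    ∃ x : H, x ∈ Subgroup.center H ∧ x ^ p = 1 ∧ x ≠ 1 ∧
      x ∈ Subgroup.normalClosure
        {y : H | (∃ a b : H, y = ⁅a, b⁆) ∨ ∃ a : H, y = a ^ p} := by
  have : Fact p.Prime := ⟨hp⟩
  have hN := mt (Subgroup.normalClosure_commutators_and_powers_eq_bot_iff p).mp hne
  obtain ⟨x, hxN, hxZ, hx⟩ :=
    hH.exists_mem_center_orderOf_eq_of_normal (N := Subgroup.normalClosure _) hN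
  refine ⟨x, hxZ, hx ▸ pow_orderOf_eq_one x, fun h => hp.one_lt.ne' ?_, hxN⟩
  rwa [h, orderOf_one, eq_comm] at hx
end

section
/- Let p be a prime, n a natural number, and H a p-subgroup of Σ_n. Let V ≤ H be a subgroup of order p contained in the kernel of the quotient map H → H/p, where H/p is the quotient of H by the normal subgroup generated by all commutators and all p-th powers. Then for every H-invariant setoid λ on Fin n with ⊥ < λ < ⊤, the induced action of V on the set of λ-classes is not transitive. -/
open scoped commutatorElement

/-!
If `V` moved the `λ`-classes transitively there would be at most `|V| = p` classes. The image
of `H` in the symmetric group on the classes is then a `p`-subgroup of `Σ_m` with `m ≤ p`, so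
its order divides `p` because `p² ∤ p!`. Such a group is abelian of exponent `p`, so all
commutators and `p`-th powers of `H`, hence `V`, act trivially on the classes; as `λ < ⊤`
gives at least two classes, `V` is not transitive.
-/

theorem Nat.Prime.sq_not_dvd_factorial_of_le {p m : ℕ} (hp : p.Prime) (hm : m ≤ p) :
    ¬ p ^ 2 ∣ m.factorial := by
  intro h
  have hsq : p * p ∣ p * (p - 1).factorial := by
    rw [← pow_two, Nat.mul_factorial_pred hp.ne_zero]
    exact h.trans (Nat.factorial_dvd_factorial hm)
  have := (hp.dvd_factorial).mp ((mul_dvd_mul_iff_left hp.ne_zero).mp hsq)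
  have := hp.two_le
  omega

theorem IsPGroup.card_dvd_of_card_le {α : Type*} [Finite α] {p : ℕ} (hp : p.Prime)
    {K : Subgroup (Equiv.Perm α)} (hK : IsPGroup p K) (hα : Nat.card α ≤ p) :
    Nat.card K ∣ p := by
  have : Fact p.Prime := ⟨hp⟩
  obtain ⟨k, hk⟩ := IsPGroup.iff_card.mp hK
  have hdvd : p ^ k ∣ (Nat.card α).factorial := by
    rw [← hk, ← Nat.card_perm]
    exact K.card_subgroup_dvd_card
  have hk1 : k ≤ 1 := by
    by_contra! hk2
    exact hp.sq_not_dvd_factorial_of_le hα ((pow_dvd_pow p hk2).trans hdvd)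
  rw [hk]
  simpa using pow_dvd_pow p hk1

theorem MonoidHom.normalClosure_commutator_or_pow_le_ker {G K : Type*} [Group G] [Group K]
    {p : ℕ} (hp : p.Prime) (f : G →* K) (hK : Nat.card K ∣ p) :
    Subgroup.normalClosure {y : G | (∃ a b : G, y = ⁅a, b⁆) ∨ ∃ a : G, y = a ^ p} ≤ f.ker := by
  have : Fact p.Prime := ⟨hp⟩
  have : IsCyclic K := isCyclic_of_card_dvd_prime hK
  refine Subgroup.normalClosure_le_normal ?_
  rintro y (⟨a, b, rfl⟩ | ⟨a, rfl⟩)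
  · rw [SetLike.mem_coe, MonoidHom.mem_ker, map_commutatorElement, commutatorElement_eq_one_iff_commute]
    exact mul_comm' (f a) (f b)
  · rw [SetLike.mem_coe, MonoidHom.mem_ker, map_pow, ← orderOf_dvd_iff_pow_eq_one]
    exact (orderOf_dvd_natCard _).trans hK

namespace Setoid

variable {α : Type*} (s : Setoid α) (H : Subgroup (Equiv.Perm α))

theorem rel_apply_iff_of_invariant (hinv : ∀ h ∈ H, ∀ x y : α, s.r x y → s.r (h x) (h y))
    {h : Equiv.Perm α} (hh : h ∈ H) (x y : α) :
    s.r x y ↔ s.r (h x) (h y) :=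
  ⟨hinv h hh x y, fun hr => by simpa using hinv h⁻¹ (inv_mem hh) _ _ hr⟩

variable (hinv : ∀ h ∈ H, ∀ x y : α, s.r x y → s.r (h x) (h y))

def quotientPermHom : H →* Equiv.Perm (Quotient s) where
  toFun h := Quotient.congr (h : Equiv.Perm α) (s.rel_apply_iff_of_invariant H hinv h.2)
  map_one' := by
    ext q
    induction q using Quotient.inductionOn
    rfl
  map_mul' a b := by
    ext q
    induction q using Quotient.inductionOn
    rfl

@[simp]
theorem quotientPermHom_mk (h : H) (x : α) :
    s.quotientPermHom H hinv h (Quotient.mk s x) = Quotient.mk s ((h : Equiv.Perm α) x) :=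
  rfl

theorem rel_of_mem_ker_quotientPermHom {h : H} (hh : h ∈ (s.quotientPermHom H hinv).ker)
    (x : α) : s.r ((h : Equiv.Perm α) x) x := by
  refine Quotient.exact (?_ : Quotient.mk s _ = Quotient.mk s x)
  rw [← quotientPermHom_mk s H hinv, MonoidHom.mem_ker.mp hh, Equiv.Perm.one_apply]

end Setoid

theorem stmt1_general (p n : ℕ) (hp : p.Prime) (H : Subgroup (Equiv.Perm (Fin n)))
    (hH : IsPGroup p H)
    (V : Subgroup H) (hV : Nat.card V = p)
    (hVker : V ≤ Subgroup.normalClosure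
      {y : H | (∃ a b : H, y = ⁅a, b⁆) ∨ ∃ a : H, y = a ^ p})
    (lam : Setoid (Fin n))
    (hinv : ∀ h ∈ H, ∀ x y : Fin n, lam.r x y → lam.r (h x) (h y))
    (htop : lam < ⊤) :
    ¬ ∀ x y : Fin n, ∃ v : V, lam.r (((v : H) : Equiv.Perm (Fin n)) x) y := by
  intro htrans
  obtain ⟨x, y, hxy⟩ : ∃ x y : Fin n, ¬ lam.r x y := by
    by_contra! h
    exact htop.ne (Setoid.ext fun a b => iff_of_true (h a b) trivial)
  set φ := lam.quotientPermHom H hinv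
  have hclasses : Nat.card (Quotient lam) ≤ p := by
    refine hV ▸ Nat.card_le_card_of_surjective
      (fun v : V => Quotient.mk lam (((v : H) : Equiv.Perm (Fin n)) x)) fun q => ?_
    induction q using Quotient.inductionOn with
    | h z => exact (htrans x z).imp fun _ => Quotient.sound
  have hrange : Nat.card φ.range ∣ p :=
    (hH.of_surjective _ φ.rangeRestrict_surjective).card_dvd_of_card_le hp hclasses
  have hVφ : V ≤ φ.ker := by
    rw [← φ.ker_rangeRestrict]
    exact hVker.trans (φ.rangeRestrict.normalClosure_commutator_or_pow_le_ker hp hrange)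
  obtain ⟨v, hv⟩ := htrans x y
  exact hxy (lam.trans (lam.symm (lam.rel_of_mem_ker_quotientPermHom H hinv (hVφ v.2) x)) hv)

/-- Let `p` be a prime, `H` a `p`-subgroup of `Σ_n`, and `V ≤ H`
a subgroup of order `p` contained in the kernel of `H → H/p` (the maximal elementary
abelian `p`-quotient).  Then for every `H`-invariant setoid `λ` on `Fin n` with
`⊥ < λ < ⊤`, the induced action of `V` on the set of `λ`-classes is not transitive. -/
theorem stmt1 (p n : ℕ) (hp : p.Prime) (H : Subgroup (Equiv.Perm (Fin n)))
    (hH : IsPGroup p H)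
    (V : Subgroup H) (hV : Nat.card V = p)
    (hVker : V ≤ Subgroup.normalClosure
      {y : H | (∃ a b : H, y = ⁅a, b⁆) ∨ ∃ a : H, y = a ^ p})
    (lam : Setoid (Fin n))
    (hinv : ∀ h ∈ H, ∀ x y : Fin n, lam.r x y → lam.r (h x) (h y))
    (hbot : ⊥ < lam) (htop : lam < ⊤) :
    ¬ ∀ x y : Fin n, ∃ v : V, lam.r (((v : H) : Equiv.Perm (Fin n)) x) y :=
  stmt1_general p n hp H hH V hV hVker lam hinv htop
end

section
/- Let p be a prime, n a natural number, and H a p-subgroup of Σ_n that is not elementary abelian. Then there exists a subgroup V of H of order p, contained in the center of H, such that for every H-invariant setoid λ on Fin n with ⊥ < λ < ⊤, the action of V on the set of λ-classes is not transitive. -/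
/-!
Let `N` be the normal closure in `H` of all commutators and `p`-th powers: it is trivial exactly
when `H` is elementary abelian, and it lies in the kernel of every homomorphism from `H` to an
elementary abelian group. As `H` is a `p`-group and `N ≠ 1`, `N` meets the centre of `H`; let `V`
be generated by an element `v ∈ N ∩ Z(H)` of order `p`. If `V` were transitive on the classes of
an `H`-invariant `λ ≠ ⊤`, there would be at most `p` classes, so the image of `H` in the symmetric
group of the classes would be a `p`-subgroup of `Σ_p`, of order at most `p`, hence elementary
abelian. Then `v ∈ N` fixes every class, which contradicts transitivity.
-/

open scoped commutatorElement Nat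

theorem Nat.Prime.not_sq_dvd_factorial {p : ℕ} (hp : p.Prime) : ¬ p ^ 2 ∣ p ! := by
  rw [← Nat.mul_factorial_pred hp.ne_zero, sq, Nat.mul_dvd_mul_iff_left hp.pos, hp.dvd_factorial]
  have := hp.pos
  omega

theorem commute_of_card_dvd_prime {p : ℕ} [Fact p.Prime] {G : Type*} [Group G]
    (h : Nat.card G ∣ p) (a b : G) : Commute a b := by
  rcases (Nat.dvd_prime Fact.out).mp h with h1 | hp
  · have := (Nat.card_eq_one_iff_unique.mp h1).1
    exact Subsingleton.elim (a * b) (b * a)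
  · have := isCyclic_of_prime_card hp
    exact mul_comm' a b

section ElementaryAbelianResidual

variable (p : ℕ) (G : Type*) [Group G]

def elementaryAbelianResidual : Subgroup G :=
  Subgroup.normalClosure {x | (∃ a b : G, ⁅a, b⁆ = x) ∨ ∃ g : G, g ^ p = x}

instance elementaryAbelianResidual_normal : (elementaryAbelianResidual p G).Normal :=
  Subgroup.normalClosure_normal

variable {p G}

theorem elementaryAbelianResidual_le_ker {Q : Type*} [Group Q] (f : G →* Q)
    (hcomm : ∀ a b, Commute (f a) (f b)) (hpow : ∀ g, f g ^ p = 1) :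
    elementaryAbelianResidual p G ≤ f.ker := by
  refine Subgroup.normalClosure_le_normal ?_
  rintro _ (⟨a, b, rfl⟩ | ⟨g, rfl⟩)
  · simp [map_commutatorElement, commutatorElement_eq_one_iff_commute, hcomm a b]
  · simp [hpow]

theorem elementaryAbelianResidual_ne_bot
    (h : ¬ ((∀ a b : G, a * b = b * a) ∧ ∀ g : G, g ^ p = 1)) :
    elementaryAbelianResidual p G ≠ ⊥ := by
  rw [Ne, Subgroup.eq_bot_iff_forall]
  intro hbot
  refine h ⟨fun a b => ?_, fun g => hbot _ (Subgroup.subset_normalClosure (Or.inr ⟨g, rfl⟩))⟩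
  exact commutatorElement_eq_one_iff_mul_comm.mp
    (hbot _ (Subgroup.subset_normalClosure (Or.inl ⟨a, b, rfl⟩)))

end ElementaryAbelianResidual

namespace IsPGroup

variable {p : ℕ} [Fact p.Prime] {G : Type*} [Group G]

theorem inf_center_ne_bot [Finite G] (hG : IsPGroup p G) {N : Subgroup G} [N.Normal]
    (hN : N ≠ ⊥) : N ⊓ Subgroup.center G ≠ ⊥ := by
  have hpN : p ∣ Nat.card N :=
    ((hG.to_subgroup N).card_eq_or_dvd).resolve_left (by rwa [Subgroup.card_eq_one])
  have hfix : (1 : N) ∈ MulAction.fixedPoints (ConjAct G) N := fun g => by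
    ext; simp
  obtain ⟨b, hb, hb1⟩ :=
    (hG.of_equiv ConjAct.toConjAct).exists_fixed_point_of_prime_dvd_card_of_fixed_point N hpN hfix
  refine fun hbot => hb1 (Subtype.ext ((Subgroup.eq_bot_iff_forall _).mp hbot b ⟨b.2, ?_⟩).symm)
  refine Subgroup.mem_center_iff.mpr fun g => ?_
  have := congrArg Subtype.val (hb (ConjAct.toConjAct g))
  rwa [ConjAct.Subgroup.val_conj_smul, ConjAct.toConjAct_smul, mul_inv_eq_iff_eq_mul] at this

theorem exists_orderOf_eq_prime_mem_inf_center [Finite G] (hG : IsPGroup p G) {N : Subgroup G}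
    [N.Normal] (hN : N ≠ ⊥) : ∃ v ∈ N ⊓ Subgroup.center G, orderOf v = p := by
  have hpK := ((hG.to_subgroup (N ⊓ Subgroup.center G)).card_eq_or_dvd).resolve_left
    (by rw [Subgroup.card_eq_one]; exact hG.inf_center_ne_bot hN)
  obtain ⟨v, hv⟩ := exists_prime_orderOf_dvd_card' p hpK
  exact ⟨v, v.2, by rwa [Subgroup.orderOf_coe]⟩

theorem card_dvd_prime_of_card_le {X : Type*} [Finite X] {K : Subgroup (Equiv.Perm X)}
    (hK : IsPGroup p K) (hX : Nat.card X ≤ p) : Nat.card K ∣ p := by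
  have hp := Fact.out (p := p.Prime)
  obtain ⟨m, hm⟩ := IsPGroup.iff_card.mp hK
  have hdvd : p ^ m ∣ p ! := by
    rw [← hm]
    refine (Subgroup.card_subgroup_dvd_card K).trans ?_
    rw [Nat.card_perm]
    exact Nat.factorial_dvd_factorial hX
  have hm1 : m ≤ 1 := by
    by_contra! h
    exact hp.not_sq_dvd_factorial ((pow_dvd_pow p h).trans hdvd)
  rw [hm]
  simpa using pow_dvd_pow p hm1

end IsPGroup

abbrev Setoid.quotientMulAction {G α : Type*} [Monoid G] [MulAction G α] (s : Setoid α)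
    (hs : ∀ (g : G) x y, s x y → s (g • x) (g • y)) : MulAction G (Quotient s) where
  smul g := Quotient.map' (g • ·) (hs g)
  one_smul q := Quotient.inductionOn q fun x => congrArg Quotient.mk'' (one_smul G x)
  mul_smul g h q := Quotient.inductionOn q fun x => congrArg Quotient.mk'' (mul_smul g h x)

theorem IsPGroup.rel_smul_of_mem_elementaryAbelianResidual {p : ℕ} [Fact p.Prime]
    {G α : Type*} [Group G] [MulAction G α] (hG : IsPGroup p G) (s : Setoid α)
    [Finite (Quotient s)] (hs : ∀ (g : G) x y, s x y → s (g • x) (g • y))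
    (hcard : Nat.card (Quotient s) ≤ p) : ∀ g ∈ elementaryAbelianResidual p G, ∀ x, s (g • x) x := by
  let := s.quotientMulAction hs
  let ρ := MulAction.toPermHom G (Quotient s)
  have hρ : Nat.card ρ.range ∣ p :=
    (hG.of_surjective ρ.rangeRestrict ρ.rangeRestrict_surjective).card_dvd_prime_of_card_le hcard
  have hker : elementaryAbelianResidual p G ≤ ρ.ker := by
    refine elementaryAbelianResidual_le_ker ρ.rangeRestrict (fun a b => ?_) (fun a => ?_) |>.trans
      ρ.ker_rangeRestrict.le
    · exact commute_of_card_dvd_prime hρ _ _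
    · exact orderOf_dvd_iff_pow_eq_one.mp ((orderOf_dvd_natCard _).trans hρ)
  exact fun g hg x => Quotient.exact (congrArg (· (Quotient.mk s x)) (hker hg) : _)

/-- Let `p` be a prime and `H` a `p`-subgroup of `Σ_n` that is not
elementary abelian.  Then there is a central subgroup `V ≤ H` of order `p` such that
for every `H`-invariant setoid `λ` on `Fin n` with `⊥ < λ < ⊤`, the action of `V` on
the set of `λ`-classes is not transitive. -/
theorem stmt2 (p n : ℕ) (hp : p.Prime) (H : Subgroup (Equiv.Perm (Fin n)))
    (hH : IsPGroup p H)
    (hne : ¬ ((∀ a ∈ H, ∀ b ∈ H, a * b = b * a) ∧ ∀ x ∈ H, x ^ p = 1)) :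
    ∃ V : Subgroup (Equiv.Perm (Fin n)), V ≤ H ∧ Nat.card V = p ∧
      (∀ v ∈ V, ∀ h ∈ H, v * h = h * v) ∧
      ∀ lam : Setoid (Fin n),
        (∀ h ∈ H, ∀ x y : Fin n, lam.r x y → lam.r (h x) (h y)) →
        ⊥ < lam → lam < ⊤ →
        ¬ ∀ x y : Fin n, ∃ v ∈ V, lam.r (v x) y := by
  have : Fact p.Prime := ⟨hp⟩
  have hres : elementaryAbelianResidual p H ≠ ⊥ :=
    elementaryAbelianResidual_ne_bot (by simpa [Subtype.ext_iff] using hne)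
  obtain ⟨v, hvNZ, hv⟩ := hH.exists_orderOf_eq_prime_mem_inf_center hres
  obtain ⟨hvN, hvZ⟩ := Subgroup.mem_inf.mp hvNZ
  set V := Subgroup.zpowers (v : Equiv.Perm (Fin n))
  have hV : Nat.card V = p := by rw [Nat.card_zpowers, Subgroup.orderOf_coe, hv]
  refine ⟨V, Subgroup.zpowers_le.mpr v.2, hV, ?_, ?_⟩
  · rintro _ ⟨m, rfl⟩ h hh
    have hcomm : Commute (v : Equiv.Perm (Fin n)) h :=
      (congrArg Subtype.val (Subgroup.mem_center_iff.mp hvZ ⟨h, hh⟩)).symm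
    exact (hcomm.zpow_left m).eq
  · intro lam hinv _ htop htrans
    obtain ⟨x₀, y₀, hxy₀⟩ : ∃ x y, ¬ lam.r x y := by
      by_contra! h
      exact htop.ne (eq_top_iff.mpr fun x y _ => h x y)
    have hcard : Nat.card (Quotient lam) ≤ p := by
      rw [← hV]
      refine Nat.card_le_card_of_surjective (fun u : V => Quotient.mk lam (u.1 x₀)) ?_
      rintro ⟨y⟩
      obtain ⟨u, hu, hy⟩ := htrans x₀ y
      exact ⟨⟨u, hu⟩, Quotient.sound hy⟩
    have hfix := hH.rel_smul_of_mem_elementaryAbelianResidual lam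
      (fun h x y => hinv h h.2 x y) hcard
    obtain ⟨_, ⟨m, rfl⟩, hm⟩ := htrans x₀ y₀
    exact hxy₀ (lam.trans (lam.symm (hfix _ (zpow_mem hvN m) x₀)) hm)
end

section
/- Let p be a prime, n a natural number, and H a p-subgroup of Σ_n. Assume that for every subgroup V of order p contained in the center of H there exists an H-invariant setoid λ on Fin n with ⊥ < λ < ⊤ such that V acts transitively on the set of λ-classes. Then H is elementary abelian and H acts freely on Fin n, i.e., no non-identity element of H fixes a point of Fin n. -/
/-!
Induction on `H`. Pick a central subgroup `V` of order `p` and a block system `λ` on whose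
classes `V` acts transitively. Every non-identity element of `V` generates `V`, so it cannot
fix a class without `V` fixing all of them, which would force `λ = ⊤`. Hence the kernel `K` of
the action of `H` on the classes meets `V` trivially, while the transitivity of the central
subgroup `V` gives `H = K V`; so `H ≅ K × V`. Central subgroups of `K` are central in `H`, so
`K` inherits the hypothesis, and by induction `K` is elementary abelian and acts freely. Then so
does `H`: if `k v` fixes `x`, then `v` fixes the class of `x`, so `v = 1` and then `k = 1`.
-/

open Equiv Subgroup

section Group

variable {G : Type*} [Group G]

theorem Subgroup.le_centralizer_of_le_sup {H K V W : Subgroup G} (hH : H ≤ K ⊔ V)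
    (hK : W ≤ centralizer (K : Set G)) (hV : W ≤ centralizer (V : Set G)) :
    W ≤ centralizer (H : Set G) := by
  have : centralizer ((K ⊔ V : Subgroup G) : Set G) =
      centralizer (K : Set G) ⊓ centralizer (V : Set G) := by
    rw [sup_eq_closure, centralizer_closure]
    exact SetLike.coe_injective Set.centralizer_union
  exact (le_inf hK hV).trans (this ▸ centralizer_le hH)

theorem Subgroup.mem_zpowers_of_card_eq_prime {p : ℕ} [Fact p.Prime] {V : Subgroup G}
    (hV : Nat.card V = p) {g v : G} (hg : g ∈ V) (hg1 : g ≠ 1) (hv : v ∈ V) :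
    v ∈ zpowers g := by
  obtain ⟨k, hk⟩ := mem_zpowers_iff.mp
    (mem_zpowers_of_prime_card hV (g := ⟨g, hg⟩) (g' := ⟨v, hv⟩) (by simpa using hg1))
  exact ⟨k, congrArg Subtype.val hk⟩

theorem IsPGroup.exists_card_eq_prime_le_centralizer {p : ℕ} [Fact p.Prime] {H : Subgroup G}
    [Finite H] (hH : IsPGroup p H) (hbot : H ≠ ⊥) :
    ∃ V ≤ H, V ≤ centralizer H ∧ Nat.card V = p := by
  have : Nontrivial H := (nontrivial_iff_ne_bot H).mpr hbot
  have : Nontrivial (center H) := hH.center_nontrivial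
  have hdvd : p ∣ Nat.card (center H) :=
    ((hH.to_subgroup _).card_eq_or_dvd).resolve_left Finite.one_lt_card.ne'
  obtain ⟨z, hz⟩ := exists_prime_orderOf_dvd_card' p hdvd
  refine ⟨zpowers ((z : H) : G), zpowers_le.mpr (z : H).2, zpowers_le.mpr fun h hh => ?_, ?_⟩
  · exact congrArg Subtype.val (mem_center_iff.mp z.2 ⟨h, hh⟩)
  · rw [Nat.card_zpowers, Subgroup.orderOf_coe, Subgroup.orderOf_coe, hz]

theorem Subgroup.pow_eq_one_of_forall_mul_eq {p : ℕ} {H K V : Subgroup G}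
    (hdec : ∀ h ∈ H, ∃ k ∈ K, ∃ v ∈ V, k * v = h) (hKH : K ≤ H) (hVH : V ≤ centralizer H)
    (hK : ∀ k ∈ K, k ^ p = 1) (hV : ∀ v ∈ V, v ^ p = 1) : ∀ h ∈ H, h ^ p = 1 := by
  intro h hh
  obtain ⟨k, hk, v, hv, rfl⟩ := hdec h hh
  have hkv : Commute k v := hVH hv k (hKH hk)
  rw [hkv.mul_pow, hK k hk, hV v hv, one_mul]

end Group

variable {α : Type*}

namespace Subgroup

def FixesSetoid (H : Subgroup (Perm α)) (r : Setoid α) : Prop :=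
  ∀ h ∈ H, ∀ x y, r x y → r (h x) (h y)

def IsTransitiveOnClasses (V : Subgroup (Perm α)) (r : Setoid α) : Prop :=
  ∀ x y, ∃ v ∈ V, r (v x) y

def CentralSubgroupsTransitiveOnBlocks (p : ℕ) (H : Subgroup (Perm α)) : Prop :=
  ∀ V ≤ H, Nat.card V = p → V ≤ centralizer H →
    ∃ r : Setoid α, H.FixesSetoid r ∧ ⊥ < r ∧ r < ⊤ ∧ V.IsTransitiveOnClasses r

end Subgroup

def Setoid.classFixer (r : Setoid α) : Subgroup (Perm α) where
  carrier := {g | ∀ x, r (g x) x}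
  one_mem' := r.refl
  mul_mem' ha hb x := r.trans (ha _) (hb x)
  inv_mem' {g} hg x := by simpa using r.symm (hg (g⁻¹ x))

namespace Subgroup

variable {H K V : Subgroup (Perm α)} {r : Setoid α}

namespace FixesSetoid

theorem mono (hH : H.FixesSetoid r) (hKH : K ≤ H) : K.FixesSetoid r :=
  fun k hk => hH k (hKH hk)

theorem rel_zpow_apply_self (hH : H.FixesSetoid r) {g : Perm α} {x : α} (hg : g ∈ H)
    (hx : r (g x) x) (k : ℤ) : r ((g ^ k) x) x := by
  have hinv : r (g⁻¹ x) x := by simpa using r.symm (hH g⁻¹ (inv_mem hg) _ _ hx)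
  induction k using Int.induction_on with
  | zero => exact r.refl x
  | succ k ih =>
    rw [add_comm, zpow_add, zpow_one, Perm.mul_apply]
    exact r.trans (hH g hg _ _ ih) hx
  | pred k ih =>
    rw [sub_eq_neg_add, zpow_add, zpow_neg_one, Perm.mul_apply]
    exact r.trans (hH g⁻¹ (inv_mem hg) _ _ ih) hinv

theorem eq_top_of_rel_apply_self (hV : V.FixesSetoid r) (hT : V.IsTransitiveOnClasses r)
    {g : Perm α} (hg : g ∈ V) (hgen : V ≤ zpowers g) {x : α} (hx : r (g x) x) : r = ⊤ := by
  have hall : ∀ y, r y x := fun y => by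
    obtain ⟨v, hv, hvy⟩ := hT x y
    obtain ⟨k, rfl⟩ := mem_zpowers_iff.mp (hgen hv)
    exact r.trans (r.symm hvy) (hV.rel_zpow_apply_self hg hx k)
  exact Setoid.eq_top_iff.mpr fun y z => r.trans (hall y) (r.symm (hall z))

theorem not_rel_apply_self {p : ℕ} [Fact p.Prime] (hV : V.FixesSetoid r)
    (hT : V.IsTransitiveOnClasses r) (hr : r ≠ ⊤) (hcard : Nat.card V = p) (g : Perm α)
    (hg : g ∈ V) (hg1 : g ≠ 1) (x : α) : ¬ r (g x) x := fun hx =>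
  hr <| hV.eq_top_of_rel_apply_self hT hg
    (fun _ hv => mem_zpowers_of_card_eq_prime hcard hg hg1 hv) hx

theorem mem_classFixer_of_rel_apply_self (hH : H.FixesSetoid r) (hT : V.IsTransitiveOnClasses r)
    (hVH : V ≤ H) {k : Perm α} (hk : k ∈ H) (hkV : k ∈ centralizer (V : Set (Perm α)))
    {x : α} (hx : r (k x) x) : k ∈ r.classFixer := by
  intro y
  obtain ⟨u, hu, huy⟩ := hT x y
  have hku : k (u x) = u (k x) := by rw [← Perm.mul_apply, ← hkV u hu, Perm.mul_apply]
  exact r.trans (r.symm (hH k hk _ _ huy)) (hku ▸ r.trans (hH u (hVH hu) _ _ hx) huy)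

theorem exists_mem_classFixer_mul_eq (hH : H.FixesSetoid r) (hT : V.IsTransitiveOnClasses r)
    (hVH : V ≤ H) (hVc : V ≤ centralizer (H : Set (Perm α))) {h : Perm α} (hh : h ∈ H) :
    ∃ k ∈ H ⊓ r.classFixer, ∃ v ∈ V, k * v = h := by
  rcases isEmpty_or_nonempty α with hα | hα
  · exact ⟨h, ⟨hh, fun x => isEmptyElim x⟩, 1, one_mem V, mul_one h⟩
  obtain ⟨x⟩ := hα
  obtain ⟨v, hv, hvx⟩ := hT x (h x)
  have hk : h * v⁻¹ ∈ H := mul_mem hh (inv_mem (hVH hv))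
  have hkV : h * v⁻¹ ∈ centralizer (V : Set (Perm α)) := le_centralizer_iff.mp hVc hk
  refine ⟨h * v⁻¹, ⟨hk, hH.mem_classFixer_of_rel_apply_self hT hVH hk hkV (x := v x) ?_⟩,
    v, hv, inv_mul_cancel_right h v⟩
  simpa using r.symm hvx

end FixesSetoid

theorem forall_apply_ne_self_of_forall_mul_eq (hdec : ∀ h ∈ H, ∃ k ∈ K, ∃ v ∈ V, k * v = h)
    (hKr : K ≤ r.classFixer) (hV : ∀ v ∈ V, v ≠ 1 → ∀ x, ¬ r (v x) x)
    (hK : ∀ k ∈ K, k ≠ 1 → ∀ x, k x ≠ x) : ∀ h ∈ H, h ≠ 1 → ∀ x, h x ≠ x := by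
  intro h hh hne x hx
  obtain ⟨k, hk, v, hv, rfl⟩ := hdec h hh
  rcases eq_or_ne v 1 with rfl | hv1
  · rw [mul_one] at hne hx
    exact hK k hk hne x hx
  · have hvx := r.symm (hKr hk (v x))
    rw [← Perm.mul_apply, hx] at hvx
    exact hV v hv hv1 x hvx

theorem CentralSubgroupsTransitiveOnBlocks.of_le_sup {p : ℕ}
    (hyp : H.CentralSubgroupsTransitiveOnBlocks p) (hKH : K ≤ H) (hHKV : H ≤ K ⊔ V)
    (hVc : V ≤ centralizer (H : Set (Perm α))) : K.CentralSubgroupsTransitiveOnBlocks p := by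
  intro W hWK hWp hWc
  have hWV : W ≤ centralizer (V : Set (Perm α)) :=
    le_centralizer_iff.mp (hVc.trans (centralizer_le (hWK.trans hKH)))
  obtain ⟨r, hr, hbot, htop, hT⟩ :=
    hyp W (hWK.trans hKH) hWp (le_centralizer_of_le_sup hHKV hWc hWV)
  exact ⟨r, hr.mono hKH, hbot, htop, hT⟩

end Subgroup

theorem Subgroup.CentralSubgroupsTransitiveOnBlocks.elementaryAbelian_and_free [Finite α] {p : ℕ}
    [Fact p.Prime] {H : Subgroup (Perm α)} (hH : IsPGroup p H)
    (hyp : H.CentralSubgroupsTransitiveOnBlocks p) :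
    (H ≤ centralizer (H : Set (Perm α)) ∧ ∀ h ∈ H, h ^ p = 1) ∧
      ∀ h ∈ H, h ≠ 1 → ∀ x, h x ≠ x := by
  induction H using WellFoundedLT.induction with | ind H ih
  rcases eq_or_ne H ⊥ with rfl | hbot
  · simp
  obtain ⟨V, hVH, hVc, hVp⟩ := hH.exists_card_eq_prime_le_centralizer hbot
  obtain ⟨r, hr, -, htop, hT⟩ := hyp V hVH hVp hVc
  set K := H ⊓ r.classFixer
  have hdec : ∀ h ∈ H, ∃ k ∈ K, ∃ v ∈ V, k * v = h := fun h hh =>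
    hr.exists_mem_classFixer_mul_eq hT hVH hVc hh
  have hHKV : H ≤ K ⊔ V := fun h hh => by
    obtain ⟨k, hk, v, hv, rfl⟩ := hdec h hh
    exact mul_mem_sup hk hv
  have hVfree := (hr.mono hVH).not_rel_apply_self hT htop.ne hVp
  have hKH : K < H := by
    obtain ⟨x, -⟩ : ∃ x y, ¬ r x y := by simpa [Setoid.eq_top_iff] using htop.ne
    obtain ⟨v, hv, hv1⟩ := V.bot_or_exists_ne_one.resolve_left
      (V.one_lt_card_iff_ne_bot.mp (hVp ▸ (Fact.out : p.Prime).one_lt))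
    exact lt_of_le_of_ne inf_le_left fun hKeq => hVfree v hv hv1 x ((hKeq ▸ hVH hv).2 x)
  obtain ⟨⟨hKab, hKp⟩, hKfree⟩ :=
    ih K hKH (hH.to_le inf_le_left) (hyp.of_le_sup inf_le_left hHKV hVc)
  refine ⟨⟨?_, pow_eq_one_of_forall_mul_eq hdec inf_le_left hVc hKp fun v hv => ?_⟩,
    forall_apply_ne_self_of_forall_mul_eq hdec inf_le_right hVfree hKfree⟩
  · exact le_centralizer_of_le_sup hHKV
      (hHKV.trans (sup_le hKab (hVc.trans (centralizer_le inf_le_left))))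
      (le_centralizer_iff.mp hVc)
  · exact orderOf_dvd_iff_pow_eq_one.mp (hVp ▸ V.orderOf_dvd_natCard hv)

/-- Let `p` be a prime and `H` a `p`-subgroup of `Σ_n`.  If for every
central subgroup `V ≤ H` of order `p` there is an `H`-invariant setoid `λ` on `Fin n`
with `⊥ < λ < ⊤` on whose classes `V` acts transitively, then `H` is elementary abelian
and acts freely on `Fin n`. -/
theorem stmt3 (p n : ℕ) (hp : p.Prime) (H : Subgroup (Equiv.Perm (Fin n)))
    (hH : IsPGroup p H)
    (hyp : ∀ V : Subgroup (Equiv.Perm (Fin n)), V ≤ H → Nat.card V = p →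
      (∀ v ∈ V, ∀ h ∈ H, v * h = h * v) →
      ∃ lam : Setoid (Fin n),
        (∀ h ∈ H, ∀ x y : Fin n, lam.r x y → lam.r (h x) (h y)) ∧
        ⊥ < lam ∧ lam < ⊤ ∧
        ∀ x y : Fin n, ∃ v ∈ V, lam.r (v x) y) :
    ((∀ a ∈ H, ∀ b ∈ H, a * b = b * a) ∧ ∀ x ∈ H, x ^ p = 1) ∧
      ∀ h ∈ H, h ≠ 1 → ∀ x : Fin n, h x ≠ x := by
  have : Fact p.Prime := ⟨hp⟩
  have hyp' : H.CentralSubgroupsTransitiveOnBlocks p := fun V hVH hVp hVc =>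
    hyp V hVH hVp fun v hv h hh => (hVc hv h hh).symm
  obtain ⟨⟨hab, hexp⟩, hfree⟩ := hyp'.elementaryAbelian_and_free hH
  exact ⟨⟨fun a ha b hb => hab hb a ha, hexp⟩, hfree⟩
end

section
/- Let n be a natural number, H ≤ Σ_n a subgroup, and V a nontrivial subgroup of H every element of which commutes with every element of H (V is central in H). Assume V does not act transitively on Fin n, and that for every H-invariant setoid λ on Fin n with ⊥ < λ < ⊤, V does not act transitively on the set of λ-classes. Call a setoid μ on Fin n strongly V-fixed if x ∼_μ v x for all v ∈ V and all x. Then: (a) the V-orbit setoid o_V, defined by x ∼ y iff y = v x for some v ∈ V, is H-invariant, strongly V-fixed, satisfies ⊥ < o_V < ⊤, and o_V ≤ μ for every strongly V-fixed setoid μ; (b) for every H-invariant setoid λ with ⊥ < λ < ⊤, the relation λ_V defined by x ∼ y iff x ∼_λ v y for some v ∈ V is an equivalence relation, is H-invariant and strongly V-fixed, satisfies λ ≤ λ_V and ⊥ < λ_V < ⊤, and λ_V ≤ μ for every strongly V-fixed setoid μ with λ ≤ μ. -/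
/-!
The orbit setoid `o_V` is the finest setoid relating each `x` to every `v x`. When `λ` is
`V`-invariant, the join `λ ⊔ o_V` is reached in a single step: `x ∼ y` iff `x ∼_λ v y` for some
`v ∈ V`. Hence `λ_V = λ ⊔ o_V`, and the minimality of `o_V` and `λ_V` is the universal property
of a join. Since `H` normalizes `V`, `h (v y) = (h v h⁻¹) (h y)` makes `o_V`, and hence
`λ ⊔ o_V`, `H`-invariant. A nontrivial permutation in `V` moves some point, so `⊥ < o_V`; and
`o_V`, resp. `λ_V`, equals `⊤` exactly when `V` is transitive on points, resp. on `λ`-classes.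
-/

open MulAction

variable {G α : Type*} [Group G] [MulAction G α]

namespace Setoid

def IsInvariant (H : Subgroup G) (r : Setoid α) : Prop :=
  ∀ h ∈ H, ∀ x y, r x y → r (h • x) (h • y)

def IsStronglyFixed (V : Subgroup G) (r : Setoid α) : Prop :=
  ∀ v ∈ V, ∀ x, r x (v • x)

variable {H K : Subgroup G} {r s : Setoid α}

theorem IsInvariant.mono (hr : r.IsInvariant H) (hKH : K ≤ H) : r.IsInvariant K :=
  fun h hh => hr h (hKH hh)

theorem IsInvariant.sup (hr : r.IsInvariant H) (hs : s.IsInvariant H) :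
    (r ⊔ s).IsInvariant H := by
  intro h hh
  have hle : r ⊔ s ≤ (r ⊔ s).comap (h • ·) := by
    refine sup_le (fun x y hxy => ?_) (fun x y hxy => ?_) <;> rw [comap_rel]
    · exact le_sup_left (a := r) (hr h hh x y hxy)
    · exact le_sup_right (b := s) (hs h hh x y hxy)
  exact fun x y hxy => hle hxy

end Setoid

namespace MulAction

variable {H V : Subgroup G} {r : Setoid α}

theorem orbitRel_subgroup_iff {x y : α} : orbitRel V α x y ↔ ∃ v ∈ V, v • x = y := by
  rw [orbitRel_apply, mem_orbit_symm, mem_orbit_iff, Subtype.exists]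
  simp only [Subgroup.mk_smul, exists_prop]

theorem orbitRel_le_iff : orbitRel V α ≤ r ↔ r.IsStronglyFixed V := by
  refine ⟨fun h v hv x => h (orbitRel_subgroup_iff.2 ⟨v, hv, rfl⟩), fun h => ?_⟩
  rw [Setoid.le_def]
  intro x y hxy
  obtain ⟨v, hv, rfl⟩ := orbitRel_subgroup_iff.1 hxy
  exact h v hv x

theorem isStronglyFixed_orbitRel : (orbitRel V α).IsStronglyFixed V :=
  orbitRel_le_iff.1 le_rfl

theorem isInvariant_orbitRel (hH : H ≤ Subgroup.normalizer (V : Set G)) :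
    (orbitRel V α).IsInvariant H := by
  intro h hh x y hxy
  obtain ⟨v, hv, rfl⟩ := orbitRel_subgroup_iff.1 hxy
  have hconj : h * v * h⁻¹ ∈ V := (Subgroup.mem_normalizer_iff.1 (hH hh) v).1 hv
  exact orbitRel_subgroup_iff.2 ⟨h * v * h⁻¹, hconj, by simp [mul_smul]⟩

theorem bot_lt_orbitRel [FaithfulSMul G α] (hV : V ≠ ⊥) : ⊥ < orbitRel V α := by
  rw [bot_lt_iff_ne_bot, Ne, ← le_bot_iff, orbitRel_le_iff]
  refine fun hfix => hV <| (Subgroup.eq_bot_iff_forall V).2 fun v hv => ?_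
  refine eq_of_smul_eq_smul (α := α) fun x => ?_
  simpa [Setoid.bot_def] using (⊥ : Setoid α).symm' (hfix v hv x)

theorem orbitRel_eq_top_iff : orbitRel V α = ⊤ ↔ ∀ x y : α, ∃ v ∈ V, v • x = y := by
  simp only [Setoid.eq_top_iff, orbitRel_subgroup_iff]

theorem equivalence_exists_smul (hr : r.IsInvariant V) :
    Equivalence fun x y => ∃ v ∈ V, r x (v • y) where
  refl x := ⟨1, V.one_mem, by simp⟩
  symm := by
    rintro x y ⟨v, hv, hxy⟩
    refine ⟨v⁻¹, V.inv_mem hv, ?_⟩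
    simpa using hr v⁻¹ (V.inv_mem hv) _ _ (r.symm' hxy)
  trans := by
    rintro x y z ⟨v, hv, hxy⟩ ⟨w, hw, hyz⟩
    refine ⟨v * w, V.mul_mem hv hw, r.trans' hxy ?_⟩
    simpa [mul_smul] using hr v hv _ _ hyz

theorem sup_orbitRel_iff (hr : r.IsInvariant V) {x y : α} :
    (r ⊔ orbitRel V α) x y ↔ ∃ v ∈ V, r x (v • y) := by
  constructor
  · intro hxy
    let s : Setoid α := ⟨_, equivalence_exists_smul hr⟩
    have hle : r ⊔ orbitRel V α ≤ s := by
      refine sup_le (fun x y hxy => ⟨1, V.one_mem, by simpa using hxy⟩) (orbitRel_le_iff.2 ?_)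
      exact fun v hv x => ⟨v⁻¹, V.inv_mem hv, by simp⟩
    exact hle hxy
  · rintro ⟨v, hv, hxy⟩
    have hvy : orbitRel V α (v • y) y := orbitRel_subgroup_iff.2 ⟨v⁻¹, V.inv_mem hv, by simp⟩
    exact (r ⊔ orbitRel V α).trans' (le_sup_left (a := r) hxy)
      (le_sup_right (b := orbitRel V α) hvy)

theorem sup_orbitRel_eq_top_iff (hr : r.IsInvariant V) :
    r ⊔ orbitRel V α = ⊤ ↔ ∀ x y : α, ∃ v ∈ V, r (v • x) y := by
  simp only [Setoid.eq_top_iff, sup_orbitRel_iff hr]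
  rw [forall_comm]
  simp only [r.comm']

end MulAction

/-- Let `H ≤ Σ_n` and let `V` be a nontrivial central subgroup of `H`
which does not act transitively on `Fin n` nor on the classes of any `H`-invariant
setoid `λ` with `⊥ < λ < ⊤`.  Then (a) the `V`-orbit setoid `o_V` is the minimal
strongly `V`-fixed setoid, is `H`-invariant and proper nontrivial; and (b) for every
`H`-invariant `λ` with `⊥ < λ < ⊤`, the relation `λ_V` (`x ∼ y ↔ ∃ v ∈ V, x ∼_λ v y`)
is an equivalence relation which is the minimal strongly `V`-fixed coarsening of `λ`,
is `H`-invariant, and satisfies `⊥ < λ_V < ⊤`. -/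
theorem stmt4 (n : ℕ) (H V : Subgroup (Equiv.Perm (Fin n)))
    (hVH : V ≤ H) (hVnt : V ≠ ⊥)
    (hcentral : ∀ v ∈ V, ∀ h ∈ H, v * h = h * v)
    (hVntrans : ¬ ∀ x y : Fin n, ∃ v ∈ V, v x = y)
    (hnotrans : ∀ lam : Setoid (Fin n),
      (∀ h ∈ H, ∀ x y : Fin n, lam.r x y → lam.r (h x) (h y)) →
      ⊥ < lam → lam < ⊤ →
      ¬ ∀ x y : Fin n, ∃ v ∈ V, lam.r (v x) y) :
    (∃ oV : Setoid (Fin n),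
      (∀ x y : Fin n, oV.r x y ↔ ∃ v ∈ V, y = v x) ∧
      (∀ h ∈ H, ∀ x y : Fin n, oV.r x y → oV.r (h x) (h y)) ∧
      (∀ v ∈ V, ∀ x : Fin n, oV.r x (v x)) ∧
      ⊥ < oV ∧ oV < ⊤ ∧
      (∀ mu : Setoid (Fin n), (∀ v ∈ V, ∀ x : Fin n, mu.r x (v x)) → oV ≤ mu)) ∧
    ∀ lam : Setoid (Fin n),
      (∀ h ∈ H, ∀ x y : Fin n, lam.r x y → lam.r (h x) (h y)) →
      ⊥ < lam → lam < ⊤ →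
      ∃ lamV : Setoid (Fin n),
        (∀ x y : Fin n, lamV.r x y ↔ ∃ v ∈ V, lam.r x (v y)) ∧
        (∀ h ∈ H, ∀ x y : Fin n, lamV.r x y → lamV.r (h x) (h y)) ∧
        (∀ v ∈ V, ∀ x : Fin n, lamV.r x (v x)) ∧
        lam ≤ lamV ∧ ⊥ < lamV ∧ lamV < ⊤ ∧
        (∀ mu : Setoid (Fin n), (∀ v ∈ V, ∀ x : Fin n, mu.r x (v x)) →
          lam ≤ mu → lamV ≤ mu) := by
  have hH : H ≤ Subgroup.normalizer (V : Set (Equiv.Perm (Fin n))) := fun h hh =>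
    Subgroup.centralizer_le_normalizer _
      (Subgroup.mem_centralizer_iff.2 fun v hv => hcentral v hv h hh)
  refine ⟨⟨orbitRel V (Fin n), fun x y => ?_, isInvariant_orbitRel hH, isStronglyFixed_orbitRel,
    bot_lt_orbitRel hVnt, lt_top_iff_ne_top.2 (mt orbitRel_eq_top_iff.1 hVntrans),
    fun mu => orbitRel_le_iff.2⟩, fun lam hlam hbot htop => ?_⟩
  · simp only [orbitRel_subgroup_iff, eq_comm]
    rfl
  have hlamV : lam.IsInvariant V := Setoid.IsInvariant.mono hlam hVH
  exact ⟨lam ⊔ orbitRel V (Fin n), fun x y => sup_orbitRel_iff hlamV,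
    Setoid.IsInvariant.sup hlam (isInvariant_orbitRel hH), orbitRel_le_iff.1 le_sup_right,
    le_sup_left, hbot.trans_le le_sup_left,
    lt_top_iff_ne_top.2 (mt (sup_orbitRel_eq_top_iff hlamV).1 (hnotrans lam hlam hbot htop)),
    fun mu hmu hle => sup_le hle (orbitRel_le_iff.2 hmu)⟩
end

section
/- Let p be a prime, n a natural number, and C ≤ Σ_n a subgroup of order p. Let λ be a C-invariant setoid on Fin n with ⊥ < λ < ⊤ such that C acts transitively on the set of λ-classes. Then λ has exactly p equivalence classes, and C acts freely on Fin n: no non-identity element of C fixes any point of Fin n. -/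
/-!
A group of prime order acting transitively on a set with at least two points acts freely:
a point stabiliser is either trivial or everything, and in the latter case that point would
be its whole orbit. Applied to the induced action on the `λ`-classes, `C` permutes the classes
regularly, so there are `|C| = p` of them, and the stabiliser of a point lies in the trivial
stabiliser of its class.
-/

namespace Setoid

variable {G α : Type*} [Group G] [MulAction G α]

abbrev quotientMulAction_s5 (r : Setoid α) (hr : ∀ g : G, ∀ x y, r x y → r (g • x) (g • y)) :
    MulAction G (Quotient r) where
  smul g := Quotient.map (g • ·) (hr g)
  one_smul := Quotient.ind fun x => congrArg Quotient.mk'' (one_smul G x)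
  mul_smul g h := Quotient.ind fun x => congrArg Quotient.mk'' (mul_smul g h x)

end Setoid

namespace MulAction

variable {G X : Type*} [Group G] [MulAction G X]

theorem stabilizer_eq_bot_of_prime_card [IsPretransitive G X] [Nontrivial X]
    [Fact (Nat.card G).Prime] (x : X) : stabilizer G x = ⊥ := by
  refine (stabilizer G x).eq_bot_or_eq_top_of_prime_card.resolve_right fun htop => ?_
  obtain ⟨y, hy⟩ := exists_ne x
  obtain ⟨g, rfl⟩ := exists_smul_eq G x y
  exact hy (mem_stabilizer_iff.mp (htop ▸ Subgroup.mem_top g))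

theorem card_eq_card_group_of_stabilizer_eq_bot [IsPretransitive G X] {x : X}
    (hx : stabilizer G x = ⊥) : Nat.card X = Nat.card G := by
  have hinj : Function.Injective (· • x : G → X) := fun g h (hgh : g • x = h • x) => by
    have : h⁻¹ * g ∈ stabilizer G x := by rw [mem_stabilizer_iff, mul_smul, hgh, inv_smul_smul]
    rwa [hx, Subgroup.mem_bot, inv_mul_eq_one, eq_comm] at this
  exact (Nat.card_eq_of_bijective _ ⟨hinj, exists_smul_eq G x⟩).symm

end MulAction

theorem stmt5_general (p n : ℕ) (hp : p.Prime) (C : Subgroup (Equiv.Perm (Fin n)))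
    (hC : Nat.card C = p)
    (lam : Setoid (Fin n))
    (hinv : ∀ c ∈ C, ∀ x y : Fin n, lam.r x y → lam.r (c x) (c y))
    (htop : lam < ⊤)
    (htrans : ∀ x y : Fin n, ∃ c ∈ C, lam.r (c x) y) :
    Nat.card (Quotient lam) = p ∧
      ∀ c ∈ C, c ≠ 1 → ∀ x : Fin n, c x ≠ x := by
  let _ := lam.quotientMulAction_s5 fun c : C => hinv c c.2
  have : Fact (Nat.card C).Prime := ⟨hC ▸ hp⟩
  have : Nontrivial (Quotient lam) := by
    rw [← not_subsingleton_iff_nontrivial, Quotient.subsingleton_iff]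
    exact htop.ne
  have : MulAction.IsPretransitive C (Quotient lam) := by
    refine ⟨Quotient.ind₂ fun x y => ?_⟩
    obtain ⟨c, hc, hxy⟩ := htrans x y
    exact ⟨⟨c, hc⟩, Quotient.sound hxy⟩
  have hfree (q : Quotient lam) : MulAction.stabilizer C q = ⊥ :=
    MulAction.stabilizer_eq_bot_of_prime_card q
  obtain ⟨q⟩ : Nonempty (Quotient lam) := inferInstance
  refine ⟨hC ▸ MulAction.card_eq_card_group_of_stabilizer_eq_bot (hfree q), ?_⟩
  intro c hc hc1 x hcx
  have hmem : (⟨c, hc⟩ : C) ∈ MulAction.stabilizer C (⟦x⟧ : Quotient lam) :=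
    congrArg Quotient.mk'' hcx
  rw [hfree, Subgroup.mem_bot] at hmem
  exact hc1 (congrArg Subtype.val hmem)

/-- Let `p` be a prime and `C ≤ Σ_n` a subgroup of order `p`.
If `λ` is a `C`-invariant setoid on `Fin n` with `⊥ < λ < ⊤` on whose classes `C`
acts transitively, then `λ` has exactly `p` classes and `C` acts freely on `Fin n`. -/
theorem stmt5 (p n : ℕ) (hp : p.Prime) (C : Subgroup (Equiv.Perm (Fin n)))
    (hC : Nat.card C = p)
    (lam : Setoid (Fin n))
    (hinv : ∀ c ∈ C, ∀ x y : Fin n, lam.r x y → lam.r (c x) (c y))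
    (hbot : ⊥ < lam) (htop : lam < ⊤)
    (htrans : ∀ x y : Fin n, ∃ c ∈ C, lam.r (c x) y) :
    Nat.card (Quotient lam) = p ∧
      ∀ c ∈ C, c ≠ 1 → ∀ x : Fin n, c x ≠ x :=
  stmt5_general p n hp C hC lam hinv htop htrans
end

section
/- Let p be a prime, G a finite group, and H a normal subgroup of G whose order is coprime to p; let π : G → G/H be the quotient homomorphism. Then: (i) for every finite chain Q_0 ≤ Q_1 ≤ … ≤ Q_m of p-subgroups of G/H there exists a chain P_0 ≤ P_1 ≤ … ≤ P_m of p-subgroups of G with π(P_t) = Q_t for every t; (ii) if P_0 ≤ … ≤ P_m and P'_0 ≤ … ≤ P'_m are two chains of p-subgroups of G with π(P_t) = π(P'_t) for every t, then there exists h ∈ H such that h P_t h⁻¹ = P'_t for every t. -/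
/-!
Lifting: a chain in `G/H` lies in its top member, which lies in the image of some Sylow
`p`-subgroup `S` of `G`; intersecting `S` with the preimages of the members gives a lifting
chain.

Conjugacy: `H` meets every `p`-subgroup trivially, so `π` is injective on `p`-subgroups and
comparability inside a common `p`-subgroup can be read off in `G/H`. In particular `P_m` and
`P'_m` are Sylow subgroups of the preimage `K` of `π(P_m)`, hence conjugate by some `g ∈ K`;
correcting `g` by an element of `P_m` with the same image yields `h ∈ H`, and `h P_t h⁻¹`,
`P'_t` are then two subgroups of `P'_m` with the same image, hence equal.
-/

open Subgroup Pointwise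

section

variable {G G' : Type*} [Group G] [Group G'] {p : ℕ}

theorem IsPGroup.disjoint_of_natCard_coprime {P N : Subgroup G} (hP : IsPGroup p P)
    (hN : (Nat.card N).Coprime p) : Disjoint P N :=
  hP.disjoint_of_coprime (fun g => ⟨1, by rw [pow_one, pow_card_eq_one']⟩) hN.symm

theorem Subgroup.le_of_map_le_map_of_disjoint_ker {f : G →* G'} {T A B : Subgroup G}
    (hT : Disjoint T f.ker) (hA : A ≤ T) (hB : B ≤ T) (hAB : A.map f ≤ B.map f) : A ≤ B := by
  intro x hx
  obtain ⟨y, hy, hyx⟩ := hAB (mem_map_of_mem f hx)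
  have hker : y⁻¹ * x ∈ f.ker := by
    rw [MonoidHom.mem_ker, map_mul, map_inv, hyx, inv_mul_cancel]
  have hT' : y⁻¹ * x ∈ T := mul_mem (inv_mem (hB hy)) (hA hx)
  rwa [← inv_mul_eq_one.mp (disjoint_def.mp hT hT' hker)]

theorem Subgroup.map_conj_smul_of_mem_ker {f : G →* G'} {h : G} (hh : h ∈ f.ker)
    (A : Subgroup G) : (MulAut.conj h • A).map f = A.map f := by
  have hconj : f.comp (MulAut.conj h).toMonoidHom = f := by
    ext x
    simp [(MonoidHom.mem_ker).mp hh]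
  change (A.map (MulAut.conj h).toMonoidHom).map f = A.map f
  rw [map_map, hconj]

theorem Subgroup.map_inf_comap_of_le {f : G →* G'} {S : Subgroup G} {Q : Subgroup G'}
    (hQ : Q ≤ S.map f) : (S ⊓ Q.comap f).map f = Q := by
  refine le_antisymm (map_le_iff_le_comap.mpr inf_le_right) fun q hq => ?_
  obtain ⟨x, hx, rfl⟩ := hQ hq
  exact mem_map_of_mem f ⟨hx, hq⟩

variable {f : G →* G'}

/-- A larger `p`-subgroup of `K` would have the same image as `A`, and `f` is injective on
`p`-subgroups. -/
def IsPGroup.toSylowSubgroupOf (hcop : (Nat.card f.ker).Coprime p) {A K : Subgroup G}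
    (hA : IsPGroup p A) (hAK : A ≤ K) (hK : K.map f ≤ A.map f) : Sylow p K where
  toSubgroup := A.subgroupOf K
  isPGroup' := hA.comap_subtype
  is_maximal' := by
    intro R hR hAR
    have hAR' : A ≤ R.map K.subtype := by
      simpa only [subgroupOf_map_subtype, inf_of_le_left hAK] using map_mono (f := K.subtype) hAR
    have hRA : R.map K.subtype ≤ A :=
      le_of_map_le_map_of_disjoint_ker ((hR.map _).disjoint_of_natCard_coprime hcop) le_rfl hAR'
        ((map_mono (map_subtype_le R)).trans hK)
    exact le_antisymm (map_le_iff_le_comap.mp hRA) hAR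

theorem conj_smul_eq_of_le_of_map_eq (hcop : (Nat.card f.ker).Coprime p) {h : G}
    (hh : h ∈ f.ker) {A B A' B' : Subgroup G} (hB' : IsPGroup p B') (hAB : A ≤ B)
    (hA'B' : A' ≤ B') (hBB' : MulAut.conj h • B = B') (hAA' : A.map f = A'.map f) :
    MulAut.conj h • A = A' := by
  have hB'f := hB'.disjoint_of_natCard_coprime hcop
  have hle : MulAut.conj h • A ≤ B' := hBB' ▸ pointwise_smul_le_pointwise_smul_iff.mpr hAB
  have hmap : (MulAut.conj h • A).map f = A'.map f := (map_conj_smul_of_mem_ker hh A).trans hAA'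
  exact le_antisymm (le_of_map_le_map_of_disjoint_ker hB'f hle hA'B' hmap.le)
    (le_of_map_le_map_of_disjoint_ker hB'f hA'B' hle hmap.ge)

variable [Finite G] [Fact p.Prime]

theorem Sylow.exists_le_map_of_surjective (hf : Function.Surjective f) {Q : Subgroup G'}
    (hQ : IsPGroup p Q) : ∃ S : Sylow p G, Q ≤ (S : Subgroup G).map f := by
  obtain ⟨S', hS'⟩ := hQ.exists_le_sylow
  obtain ⟨S, rfl⟩ := Sylow.mapSurjective_surjective hf p S'
  exact ⟨S, hS'⟩

theorem exists_monotone_isPGroup_map_eq {ι : Type*} [Preorder ι] [OrderTop ι]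
    (hf : Function.Surjective f) {Q : ι → Subgroup G'} (hQ : Monotone Q)
    (hQp : IsPGroup p (Q ⊤)) :
    ∃ P : ι → Subgroup G, Monotone P ∧ (∀ i, IsPGroup p (P i)) ∧ ∀ i, (P i).map f = Q i := by
  obtain ⟨S, hS⟩ := Sylow.exists_le_map_of_surjective hf hQp
  exact ⟨fun i => S ⊓ (Q i).comap f, fun i j hij => inf_le_inf_left _ (comap_mono (hQ hij)),
    fun i => S.2.to_le inf_le_left, fun i => map_inf_comap_of_le ((hQ le_top).trans hS)⟩

theorem exists_mem_ker_conj_smul_eq_of_map_eq (hcop : (Nat.card f.ker).Coprime p)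
    {A A' : Subgroup G} (hA : IsPGroup p A) (hA' : IsPGroup p A') (hAA' : A.map f = A'.map f) :
    ∃ h ∈ f.ker, MulAut.conj h • A = A' := by
  set K := (A.map f).comap f
  have hAK : A ≤ K := le_comap_map f A
  have hA'K : A' ≤ K := (le_comap_map f A').trans (comap_mono hAA'.ge)
  have hK : K.map f ≤ A.map f := map_comap_le _ _
  obtain ⟨g, hg⟩ := MulAction.exists_smul_eq K (hA.toSylowSubgroupOf hcop hAK hK)
    (hA'.toSylowSubgroupOf hcop hA'K (hAA' ▸ hK))
  have hgA : MulAut.conj (g : G) • A = A' := by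
    have hgA' := congrArg Sylow.toSubgroup hg
    rwa [Sylow.coe_subgroup_smul, IsPGroup.toSylowSubgroupOf, IsPGroup.toSylowSubgroupOf,
      conj_smul_subgroupOf hAK, subgroupOf_inj, inf_of_le_left (conj_smul_le_of_le hAK g),
      inf_of_le_left hA'K] at hgA'
  obtain ⟨a, ha, hag⟩ : f g ∈ A.map f := g.2
  refine ⟨g * a⁻¹, by rw [MonoidHom.mem_ker, map_mul, map_inv, hag, mul_inv_cancel], ?_⟩
  rw [map_mul, mul_smul, conj_smul_eq_self_of_mem (inv_mem ha), hgA]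

end

/-- Let `p` be a prime, `G` a finite group and `H ⊴ G` a normal
subgroup of order coprime to `p`, with quotient map `π : G → G/H`.  (i) Every chain
of `p`-subgroups of `G/H` lifts to a chain of `p`-subgroups of `G`; (ii) two chains of
`p`-subgroups of `G` with the same images under `π` are conjugate by an element of `H`. -/
theorem stmt7 (p : ℕ) (hp : p.Prime) (G : Type*) [Group G] [Finite G]
    (H : Subgroup G) [H.Normal] (hcop : (Nat.card H).Coprime p) :
    (∀ (m : ℕ) (Q : Fin (m + 1) → Subgroup (G ⧸ H)), Monotone Q →
      (∀ t, IsPGroup p (Q t)) →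
      ∃ P : Fin (m + 1) → Subgroup G, Monotone P ∧ (∀ t, IsPGroup p (P t)) ∧
        ∀ t, Subgroup.map (QuotientGroup.mk' H) (P t) = Q t) ∧
    (∀ (m : ℕ) (P P' : Fin (m + 1) → Subgroup G), Monotone P → Monotone P' →
      (∀ t, IsPGroup p (P t)) → (∀ t, IsPGroup p (P' t)) →
      (∀ t, Subgroup.map (QuotientGroup.mk' H) (P t)
          = Subgroup.map (QuotientGroup.mk' H) (P' t)) →
      ∃ h ∈ H, ∀ t, Subgroup.map (MulAut.conj h).toMonoidHom (P t) = P' t) := by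
  have : Fact p.Prime := ⟨hp⟩
  have hcop' : (Nat.card (QuotientGroup.mk' H).ker).Coprime p := by
    rwa [QuotientGroup.ker_mk']
  refine ⟨fun m Q hQ hQp =>
    exists_monotone_isPGroup_map_eq (QuotientGroup.mk'_surjective H) hQ (hQp ⊤), ?_⟩
  intro m P P' hP hP' hPp hP'p hmap
  obtain ⟨h, hh, htop⟩ :=
    exists_mem_ker_conj_smul_eq_of_map_eq hcop' (hPp ⊤) (hP'p ⊤) (hmap ⊤)
  exact ⟨h, QuotientGroup.ker_mk' H ▸ hh, fun t =>
    conj_smul_eq_of_le_of_map_eq hcop' hh (hP'p ⊤) (hP le_top) (hP' le_top) htop (hmap t)⟩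
end

section
/- Let p be a prime, G a finite group, and H a normal subgroup of G whose order is coprime to p; let π : G → G/H be the quotient homomorphism. Let Q be a p-subgroup of G/H and let Q̃ = π⁻¹(Q) be its preimage in G. Then every p-subgroup P of G with π(P) = Q is a Sylow p-subgroup of Q̃; moreover, any two p-subgroups P₁, P₂ of G with π(P₁) = π(P₂) = Q are conjugate by an element of H. -/
/-!
If `π(P) = Q` then `π⁻¹(Q) = H ⊔ P`, and the index of `P` in `H ⊔ P` equals that of
`H ⊓ P` in `H`, a divisor of `|H|`; so the `p`-group `P` is Sylow in `π⁻¹(Q)`. Two such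
subgroups are conjugate in `H ⊔ P₁` by Sylow's theorem, and writing the conjugator as
`h * x` with `h ∈ H`, `x ∈ P₁`, the factor `x` normalises `P₁`.
-/

open Subgroup
open scoped Pointwise

namespace Subgroup

variable {G : Type*} [Group G]

theorem relIndex_sup_of_normal_left [Finite G] (N P : Subgroup G) [N.Normal] :
    P.relIndex (N ⊔ P) = P.relIndex N := by
  -- the index of `N ⊓ P` in `N ⊔ P`, computed through `P` and through `N`
  have hfactor : (N ⊓ P).relIndex P * P.relIndex (N ⊔ P) =
      (N ⊓ P).relIndex N * N.relIndex (N ⊔ P) := by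
    rw [relIndex_mul_relIndex _ _ _ inf_le_right le_sup_right,
      relIndex_mul_relIndex _ _ _ inf_le_left le_sup_left]
  rw [relIndex_sup_left, ← inf_relIndex_right N P, inf_relIndex_left, mul_comm] at hfactor
  exact Nat.eq_of_mul_eq_mul_right (Nat.pos_of_ne_zero FiniteIndex.index_ne_zero) hfactor

theorem exists_conj_smul_eq_of_mem_normal_sup {N P : Subgroup G} [N.Normal] {g : G}
    (hg : g ∈ N ⊔ P) : ∃ n ∈ N, MulAut.conj g • P = MulAut.conj n • P := by
  obtain ⟨n, hn, x, hx, rfl⟩ := mem_sup_of_normal_left.mp hg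
  exact ⟨n, hn, by rw [map_mul, mul_smul, conj_smul_eq_self_of_mem hx]⟩

end Subgroup

theorem QuotientGroup.comap_mk'_map_mk' {G : Type*} [Group G] (N P : Subgroup G) [N.Normal] :
    (Subgroup.map (mk' N) P).comap (mk' N) = N ⊔ P := by
  rw [comap_map_eq, ker_mk', sup_comm]

theorem IsPGroup.exists_conj_smul_eq_of_relIndex_coprime {p : ℕ} [Fact p.Prime]
    {G : Type*} [Group G] [Finite G] {K P₁ P₂ : Subgroup G}
    (hP₁ : IsPGroup p P₁) (hP₂ : IsPGroup p P₂) (hle₁ : P₁ ≤ K) (hle₂ : P₂ ≤ K)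
    (hcop₁ : (P₁.relIndex K).Coprime p) (hcop₂ : (P₂.relIndex K).Coprime p) :
    ∃ g ∈ K, MulAut.conj g • P₁ = P₂ := by
  let toSylow {P : Subgroup G} (hP : IsPGroup p P) (hcop : (P.relIndex K).Coprime p) :
      Sylow p K :=
    (hP.comap_subtype : IsPGroup p (P.subgroupOf K)).toSylow
      ((Nat.Prime.coprime_iff_not_dvd Fact.out).mp hcop.symm)
  obtain ⟨g, hg⟩ := MulAction.exists_smul_eq K (toSylow hP₁ hcop₁) (toSylow hP₂ hcop₂)
  refine ⟨g, g.2, ?_⟩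
  have h : MulAut.conj g • P₁.subgroupOf K = P₂.subgroupOf K :=
    congrArg ((↑) : Sylow p K → Subgroup K) hg
  rwa [conj_smul_subgroupOf hle₁, subgroupOf_inj, inf_of_le_left (conj_smul_le_of_le hle₁ g),
    inf_of_le_left hle₂] at h

theorem stmt8_general (p : ℕ) (hp : p.Prime) (G : Type*) [Group G] [Finite G]
    (H : Subgroup G) [H.Normal] (hcop : (Nat.card H).Coprime p)
    (Q : Subgroup (G ⧸ H)) :
    (∀ P : Subgroup G, IsPGroup p P →
      Subgroup.map (QuotientGroup.mk' H) P = Q →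
      P ≤ Subgroup.comap (QuotientGroup.mk' H) Q ∧
      (P.relIndex (Subgroup.comap (QuotientGroup.mk' H) Q)).Coprime p) ∧
    ∀ P₁ P₂ : Subgroup G, IsPGroup p P₁ → IsPGroup p P₂ →
      Subgroup.map (QuotientGroup.mk' H) P₁ = Q →
      Subgroup.map (QuotientGroup.mk' H) P₂ = Q →
      ∃ h ∈ H, Subgroup.map (MulAut.conj h).toMonoidHom P₁ = P₂ := by
  have : Fact p.Prime := ⟨hp⟩
  have sylow {P : Subgroup G} (hP : map (QuotientGroup.mk' H) P = Q) :
      P ≤ comap (QuotientGroup.mk' H) Q ∧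
        (P.relIndex (comap (QuotientGroup.mk' H) Q)).Coprime p := by
    rw [← hP, QuotientGroup.comap_mk'_map_mk', relIndex_sup_of_normal_left]
    exact ⟨le_sup_right, hcop.coprime_dvd_left (relIndex_dvd_card P H)⟩
  refine ⟨fun P _ hP ↦ sylow hP, fun P₁ P₂ hP₁ hP₂ hm₁ hm₂ ↦ ?_⟩
  obtain ⟨g, hg, hconj⟩ := hP₁.exists_conj_smul_eq_of_relIndex_coprime hP₂
    (sylow hm₁).1 (sylow hm₂).1 (sylow hm₁).2 (sylow hm₂).2
  rw [← hm₁, QuotientGroup.comap_mk'_map_mk'] at hg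
  obtain ⟨h, hh, hgh⟩ := exists_conj_smul_eq_of_mem_normal_sup hg
  exact ⟨h, hh, hgh.symm.trans hconj⟩

/-- Let `p` be a prime, `G` a finite group, `H ⊴ G` normal of order
coprime to `p`, `π : G → G/H` the quotient map, `Q` a `p`-subgroup of `G/H` and
`Q̃ = π⁻¹(Q)`.  Then every `p`-subgroup `P ≤ G` with `π(P) = Q` is a Sylow
`p`-subgroup of `Q̃` (i.e. `P ≤ Q̃` and the index of `P` in `Q̃` is coprime to `p`),
and any two such are conjugate by an element of `H`. -/
theorem stmt8 (p : ℕ) (hp : p.Prime) (G : Type*) [Group G] [Finite G]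
    (H : Subgroup G) [H.Normal] (hcop : (Nat.card H).Coprime p)
    (Q : Subgroup (G ⧸ H)) (hQ : IsPGroup p Q) :
    (∀ P : Subgroup G, IsPGroup p P →
      Subgroup.map (QuotientGroup.mk' H) P = Q →
      P ≤ Subgroup.comap (QuotientGroup.mk' H) Q ∧
      (P.relIndex (Subgroup.comap (QuotientGroup.mk' H) Q)).Coprime p) ∧
    ∀ P₁ P₂ : Subgroup G, IsPGroup p P₁ → IsPGroup p P₂ →
      Subgroup.map (QuotientGroup.mk' H) P₁ = Q →
      Subgroup.map (QuotientGroup.mk' H) P₂ = Q →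
      ∃ h ∈ H, Subgroup.map (MulAut.conj h).toMonoidHom P₁ = P₂ :=
  stmt8_general p hp G H hcop Q
end

section
/- Let p be a prime, G a finite group, ℤ_(p) the localization of the integers at the prime ideal (p), R = ℤ_(p)[G] the group algebra of G over ℤ_(p), and R̄ = 𝔽_p[G] the group algebra of G over the field with p elements. Let M be a finitely generated R-module such that multiplication by p on M is injective and such that the quotient module M/pM is projective as an R̄-module. Then M is a projective R-module. -/
/-- The ideal `(p) ⊆ ℤ` is prime, for `p` a prime number. -/
instance stmt9_span_p_isPrime (p : ℕ) [Fact p.Prime] :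
    (Ideal.span {(p : ℤ)}).IsPrime := by
  rw [Ideal.span_singleton_prime (by exact_mod_cast (Fact.out : p.Prime).ne_zero)]
  exact Nat.prime_iff_prime_int.mp Fact.out

/-!
Choose a presentation `π : Sⁿ → M` over `S = ℤ_(p)[G]` with kernel `K`. The reduction of `π`
modulo `p` splits because `M/pM` is projective; since `Sⁿ` is free, `1 - s ∘ π̄` lifts to a map
`σ : Sⁿ → K`, and because `M` has no `p`-torsion, `σ` restricted to `K` is the identity modulo
`pK`. As `K` is finitely generated over the Noetherian local ring `ℤ_(p)`, Nakayama makes this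
endomorphism of `K` surjective, hence bijective, so `K` is a direct summand of `Sⁿ` and
`M ≅ Sⁿ/K` is projective.
-/

open Function LinearMap Submodule

theorem LinearMap.bijective_of_forall_eq_add_smul {A N : Type*} [CommRing A] [AddCommGroup N]
    [Module A N] [IsNoetherian A N] {t : A} (ht : t ∈ (⊥ : Ideal A).jacobson)
    (τ : N →ₗ[A] N) (hτ : ∀ x, ∃ w, x = τ x + t • w) : Bijective τ := by
  refine IsNoetherian.bijective_of_surjective_endomorphism τ ?_
  refine τ.surjective_of_surjective_comp_mkQ (Ideal.span {t})
    (Ideal.span_le.mpr (Set.singleton_subset_iff.mpr ht)) ?_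
  intro y
  obtain ⟨x, rfl⟩ := mkQ_surjective _ y
  obtain ⟨w, hw⟩ := hτ x
  refine ⟨x, ?_⟩
  rw [comp_apply, mkQ_apply, mkQ_apply, Submodule.Quotient.eq]
  nth_rw 2 [hw]
  rw [sub_add_cancel_left]
  exact neg_mem (smul_mem_smul (Ideal.mem_span_singleton_self t) trivial)

theorem Module.Projective.of_surjective_of_ker_retraction {S F M : Type*} [Ring S]
    [AddCommGroup F] [Module S F] [Module.Projective S F] [AddCommGroup M] [Module S M]
    {π : F →ₗ[S] M} (hπ : Surjective π) (r : F →ₗ[S] ker π) (hr : ∀ k : ker π, r k = k) :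
    Module.Projective S M := by
  have h : IsCompl (ker π) (ker r) := isCompl_of_proj hr
  have : Module.Projective S (ker r) :=
    .of_split (ker r).subtype _ ((ker r).projectionOnto_comp_subtype h.symm)
  exact .of_equiv ((π.quotKerEquivOfSurjective hπ).symm.trans (quotientEquivOfIsCompl _ _ h)).symm

def RingHom.compLeftₛₗ {S Sb : Type*} [Ring S] [Ring Sb] (φ : S →+* Sb) (ι : Type*) :
    (ι → S) →ₛₗ[φ] (ι → Sb) where
  toFun x i := φ (x i)
  map_add' x y := funext fun i => map_add φ (x i) (y i)
  map_smul' r x := funext fun i => map_mul φ r (x i)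

section Reduction

variable {S Sb M Mbar : Type*} [Ring S] [Ring Sb] [AddCommGroup M] [Module S M]
  [AddCommGroup Mbar] [Module Sb Mbar] {φ : S →+* Sb} {n : ℕ}

@[simp]
theorem RingHom.compLeftₛₗ_single {ι : Type*} [DecidableEq ι] (i : ι) (s : S) :
    φ.compLeftₛₗ ι (Pi.single i s) = Pi.single i (φ s) :=
  funext fun j => Pi.apply_single (fun _ => φ) (fun _ => map_zero φ) i s j

theorem RingHom.compLeftₛₗ_surjective (hφ : Surjective φ) (ι : Type*) :
    Surjective (φ.compLeftₛₗ ι) :=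
  hφ.comp_left

theorem RingHom.exists_eq_smul_of_compLeftₛₗ_eq_zero {t : S}
    (hφ : ∀ s, φ s = 0 → ∃ s', s = t * s') {ι : Type*} {x : ι → S}
    (hx : φ.compLeftₛₗ ι x = 0) : ∃ w, x = t • w := by
  choose w hw using fun i => hφ (x i) (congrFun hx i)
  exact ⟨w, funext hw⟩

theorem exists_reduction_of_presentation (π : (Fin n → S) →ₗ[S] M) (q : M →ₛₗ[φ] Mbar) :
    ∃ πb : (Fin n → Sb) →ₗ[Sb] Mbar, ∀ x, πb (φ.compLeftₛₗ _ x) = q (π x) := by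
  let πb := (Pi.basisFun Sb (Fin n)).constr ℕ fun i => q (π (Pi.single i 1))
  have h : (πb.comp (φ.compLeftₛₗ (Fin n)) : (Fin n → S) →ₛₗ[φ] Mbar) = q.comp π := by
    refine (Pi.basisFun S (Fin n)).ext fun i => ?_
    simp [πb]
  exact ⟨πb, LinearMap.congr_fun h⟩

theorem exists_mem_ker_of_reduction_eq_zero {t : S} (hφt : φ t = 0) (hφ : Surjective φ)
    {π : (Fin n → S) →ₗ[S] M} (hπ : Surjective π) {q : M →ₛₗ[φ] Mbar}
    (hq : ∀ m, q m = 0 → ∃ m', m = t • m') {πb : (Fin n → Sb) →ₗ[Sb] Mbar}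
    (hπb : ∀ x, πb (φ.compLeftₛₗ _ x) = q (π x)) {y : Fin n → Sb} (hy : πb y = 0) :
    ∃ k ∈ ker π, φ.compLeftₛₗ _ k = y := by
  obtain ⟨x, rfl⟩ := φ.compLeftₛₗ_surjective hφ _ y
  obtain ⟨m', hm'⟩ := hq (π x) (by rw [← hπb, hy])
  obtain ⟨x', rfl⟩ := hπ m'
  refine ⟨x - t • x', by rw [mem_ker, map_sub, map_smul, ← hm', sub_self], ?_⟩
  rw [map_sub, map_smulₛₗ, hφt, zero_smul, sub_zero]

theorem exists_toKer_lift {π : (Fin n → S) →ₗ[S] M} {πb : (Fin n → Sb) →ₗ[Sb] Mbar}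
    (hlift : ∀ y, πb y = 0 → ∃ k ∈ ker π, φ.compLeftₛₗ _ k = y)
    (g : (Fin n → Sb) →ₗ[Sb] (Fin n → Sb)) (hg : πb ∘ₗ g = 0) :
    ∃ σ : (Fin n → S) →ₗ[S] ker π, ∀ x, φ.compLeftₛₗ _ (σ x) = g (φ.compLeftₛₗ _ x) := by
  choose k hk hk' using fun i => hlift (g (Pi.single i 1)) (LinearMap.congr_fun hg _)
  let σ := (Pi.basisFun S (Fin n)).constr ℕ fun i => (⟨k i, hk i⟩ : ker π)
  have h : ((φ.compLeftₛₗ (Fin n)).comp ((ker π).subtype ∘ₗ σ) : (Fin n → S) →ₛₗ[φ] _) =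
      g.comp (φ.compLeftₛₗ (Fin n)) := by
    refine (Pi.basisFun S (Fin n)).ext fun i => ?_
    simp [σ, hk']
  exact ⟨σ, LinearMap.congr_fun h⟩

theorem exists_toKer_eq_add_smul [Module.Projective Sb Mbar] {t : S}
    (hφ : Surjective φ) (hφker : ∀ s, φ s = 0 ↔ ∃ s', s = t * s')
    (htM : Injective fun m : M => t • m) {π : (Fin n → S) →ₗ[S] M} (hπ : Surjective π)
    {q : M →ₛₗ[φ] Mbar} (hq : Surjective q) (hqker : ∀ m, q m = 0 ↔ ∃ m', m = t • m') :
    ∃ σ : (Fin n → S) →ₗ[S] ker π, ∀ k : ker π, ∃ w : ker π, k = σ k + t • w := by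
  obtain ⟨πb, hπb⟩ := exists_reduction_of_presentation π q
  have hπb_surj : Surjective πb := by
    intro mb
    obtain ⟨x, rfl⟩ := (hq.comp hπ) mb
    exact ⟨_, hπb x⟩
  obtain ⟨sb, hsb⟩ := πb.exists_rightInverse_of_surjective (range_eq_top.2 hπb_surj)
  have hφt : φ t = 0 := (hφker t).2 ⟨1, (mul_one t).symm⟩
  obtain ⟨σ, hσ⟩ := exists_toKer_lift
    (fun y hy => exists_mem_ker_of_reduction_eq_zero hφt hφ hπ (fun m => (hqker m).1) hπb hy)
    (LinearMap.id - sb ∘ₗ πb)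
    (by rw [comp_sub, LinearMap.comp_id, ← LinearMap.comp_assoc, hsb, LinearMap.id_comp, sub_self])
  refine ⟨σ, fun k => ?_⟩
  have hk : πb (φ.compLeftₛₗ _ k) = 0 := by rw [hπb, mem_ker.1 k.2, map_zero]
  obtain ⟨w, hw⟩ := φ.exists_eq_smul_of_compLeftₛₗ_eq_zero (fun s => (hφker s).1)
    (x := (σ k : Fin n → S) - (k : Fin n → S)) (by simp [hσ, hk])
  have hwK : w ∈ ker π := htM <| by simp [← map_smul, ← hw]
  exact ⟨-⟨w, hwK⟩, Subtype.ext <| by simp [← hw]⟩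

end Reduction

theorem Module.Projective.of_reduction {A S Sb M Mbar : Type*} [CommRing A] [IsNoetherianRing A]
    [Ring S] [Algebra A S] [Module.Finite A S] [Ring Sb] [AddCommGroup M] [Module S M]
    [Module.Finite S M] [AddCommGroup Mbar] [Module Sb Mbar] [Module.Projective Sb Mbar]
    {t : A} (ht : t ∈ (⊥ : Ideal A).jacobson) {φ : S →+* Sb} (hφ : Surjective φ)
    (hφker : ∀ s, φ s = 0 ↔ ∃ s', s = algebraMap A S t * s')
    (htM : Function.Injective fun m : M => algebraMap A S t • m)
    (q : M →ₛₗ[φ] Mbar) (hq : Surjective q)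
    (hqker : ∀ m, q m = 0 ↔ ∃ m', m = algebraMap A S t • m') :
    Module.Projective S M := by
  obtain ⟨n, π, hπ⟩ := Module.Finite.exists_fin' S M
  obtain ⟨σ, hσ⟩ := exists_toKer_eq_add_smul hφ hφker htM hπ hq hqker
  have : IsNoetherian A (ker π) := inferInstanceAs (IsNoetherian A ((ker π).restrictScalars A))
  have hτ : Bijective ((σ ∘ₗ (ker π).subtype).restrictScalars A) :=
    LinearMap.bijective_of_forall_eq_add_smul ht _ fun k => by
      obtain ⟨w, hw⟩ := hσ k
      exact ⟨w, by rwa [algebraMap_smul] at hw⟩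
  let τ := LinearEquiv.ofBijective (σ ∘ₗ (ker π).subtype) hτ
  exact .of_surjective_of_ker_retraction hπ (τ.symm ∘ₗ σ) τ.symm_apply_apply

namespace MonoidAlgebra

variable {R k G : Type*} [CommRing R] [Ring k] [Monoid G] {f : R →+* k}

theorem eq_mapRingHom_of_single {φ : MonoidAlgebra R G →+* MonoidAlgebra k G}
    (hφ : ∀ g x, φ (single g x) = single g (f x)) : φ = mapRingHom G f :=
  RingHom.coe_addMonoidHom_injective <| addMonoidHom_ext fun g x => by simp [hφ]

theorem mapRingHom_eq_zero_iff {c : R} (hf : ∀ r, f r = 0 ↔ ∃ y, r = c * y)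
    (s : MonoidAlgebra R G) : mapRingHom G f s = 0 ↔ ∃ s', s = algebraMap R _ c * s' := by
  constructor
  · intro hs
    have hcoeff : ∀ g, s.coeff g ∈ Set.range (AddMonoidHom.mulLeft c) := fun g => by
      obtain ⟨y, hy⟩ := (hf _).1 (by simpa using congr(($hs).coeff g))
      exact ⟨y, hy.symm⟩
    obtain ⟨s', rfl⟩ : s ∈ Set.range (map (AddMonoidHom.mulLeft c)) := by
      rw [range_map]; exact hcoeff
    refine ⟨s', ?_⟩
    rw [← Algebra.smul_def]
    ext g
    simp
  · rintro ⟨s', rfl⟩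
    have hc : f c = 0 := (hf c).2 ⟨1, (mul_one c).symm⟩
    simp [hc]

end MonoidAlgebra

namespace Localization.AtPrime

variable {R : Type*} [CommRing R] (a : R) [(Ideal.span {a}).IsPrime]

theorem maximalIdeal_eq_span_singleton :
    IsLocalRing.maximalIdeal (Localization.AtPrime (Ideal.span {a})) =
      Ideal.span {algebraMap R _ a} := by
  rw [← IsLocalization.AtPrime.map_eq_maximalIdeal (Ideal.span {a}), Ideal.map_span,
    Set.image_singleton]

theorem algebraMap_mem_jacobson_bot :
    algebraMap R _ a ∈ (⊥ : Ideal (Localization.AtPrime (Ideal.span {a}))).jacobson := by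
  rw [IsLocalRing.jacobson_eq_maximalIdeal ⊥ bot_ne_top, maximalIdeal_eq_span_singleton]
  exact Ideal.mem_span_singleton_self _

theorem ringHom_eq_zero_iff {K : Type*} [Semiring K] [Nontrivial K]
    (f : Localization.AtPrime (Ideal.span {a}) →+* K) (hfa : f (algebraMap R _ a) = 0)
    (x : Localization.AtPrime (Ideal.span {a})) :
    f x = 0 ↔ ∃ y, x = algebraMap R _ a * y := by
  constructor
  · intro hx
    have hker : RingHom.ker f ≤ IsLocalRing.maximalIdeal _ :=
      IsLocalRing.le_maximalIdeal (RingHom.ker_ne_top f)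
    obtain ⟨y, hy⟩ := Ideal.mem_span_singleton'.1
      (maximalIdeal_eq_span_singleton a ▸ hker (RingHom.mem_ker.2 hx))
    exact ⟨y, by rw [← hy, mul_comm]⟩
  · rintro ⟨y, rfl⟩
    rw [map_mul, hfa, zero_mul]

end Localization.AtPrime

/-- Let `R = ℤ_(p)[G]` and `R̄ = 𝔽_p[G]` for a finite group `G`.
If `M` is a finitely generated `R`-module on which multiplication by `p` is injective
and whose reduction `M/pM` (formalized as a surjection `q : M → Mbar` onto an
`R̄`-module, compatible with the coefficient-reduction ring map `φ : R → R̄` and with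
kernel `pM`) is projective over `R̄`, then `M` is projective over `R`. -/
theorem stmt9 (p : ℕ) [Fact p.Prime] (G : Type*) [Group G] [Finite G]
    (M : Type*) [AddCommGroup M]
    [Module (MonoidAlgebra (Localization.AtPrime (Ideal.span {(p : ℤ)})) G) M]
    [Module.Finite (MonoidAlgebra (Localization.AtPrime (Ideal.span {(p : ℤ)})) G) M]
    (hpM : Function.Injective fun m : M => p • m)
    (Mbar : Type*) [AddCommGroup Mbar] [Module (MonoidAlgebra (ZMod p) G) Mbar]
    (φ : MonoidAlgebra (Localization.AtPrime (Ideal.span {(p : ℤ)})) G →+*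
         MonoidAlgebra (ZMod p) G)
    (f : Localization.AtPrime (Ideal.span {(p : ℤ)}) →+* ZMod p)
    (hφ : ∀ (g : G) (x : Localization.AtPrime (Ideal.span {(p : ℤ)})),
      φ (MonoidAlgebra.single g x) = MonoidAlgebra.single g (f x))
    (q : M →+ Mbar) (hqsurj : Function.Surjective q)
    (hqcomp : ∀ (r : MonoidAlgebra (Localization.AtPrime (Ideal.span {(p : ℤ)})) G)
      (m : M), q (r • m) = φ r • q m)
    (hker : ∀ m : M, q m = 0 ↔ ∃ m' : M, m = p • m')
    (hproj : Module.Projective (MonoidAlgebra (ZMod p) G) Mbar) :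
    Module.Projective (MonoidAlgebra (Localization.AtPrime (Ideal.span {(p : ℤ)})) G) M := by
  obtain rfl := MonoidAlgebra.eq_mapRingHom_of_single hφ
  have hf := Localization.AtPrime.ringHom_eq_zero_iff _ f (by simp)
  exact .of_reduction (Localization.AtPrime.algebraMap_mem_jacobson_bot _)
    (MonoidAlgebra.map_surjective _ (ZMod.ringHom_surjective f))
    (MonoidAlgebra.mapRingHom_eq_zero_iff hf)
    (by simpa only [map_natCast, Nat.cast_smul_eq_nsmul] using hpM)
    { toFun := q, map_add' := q.map_add, map_smul' := hqcomp } hqsurj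
    fun m => (hker m).trans <| by simp only [map_natCast, Nat.cast_smul_eq_nsmul]
end

section
/- Let p be a prime and n a natural number. Let λ_0 < λ_1 < … < λ_j be a strictly increasing chain of proper nontrivial setoids on Fin n and let K ≤ Σ_n be its stabilizer; set λ_{-1} = ⊥ and λ_{j+1} = ⊤. Let D ≤ K be an elementary abelian p-subgroup acting freely on Fin n. Suppose that for some index i with 0 ≤ i ≤ j+1: the action of D on the set of λ_i-classes is transitive, the action of D on the set of λ_{i-1}-classes is not transitive, and some non-identity element d ∈ D satisfies d x ∼_{λ_i} x for all x ∈ Fin n. Then p divides the index [C : D], where C is the centralizer of D in K. -/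
/-!
Let `μ = λ_{i-1}`. Since `D` is not transitive on the `μ`-classes, the `D`-saturation `X` of one
`μ`-class is a proper nonempty subset of `Fin n`, `D`-invariant and a union of `μ`-classes. Let
`c` act as `d` on `X` and as the identity elsewhere. Then `c` preserves `λ_t` for `t < i` because
`X` is a union of `λ_t`-classes, and for `t ≥ i` because `d` and hence `c` move every point within
its `λ_t`-class; `c` commutes with the abelian group `D` because `X` is `D`-invariant; and `c ∉ D`
because `c ≠ 1` has a fixed point while `D` acts freely. As `c ^ p = 1` and `D` is normal in its
centralizer, `c` has order `p` in `C / D`.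
-/

/-- The chain `λ_0 < … < λ_j` extended by `λ_{-1} = ⊥` and `λ_{j+1} = ⊤`, reindexed so
that `extChain lam (i + 1) = λ_i` for `0 ≤ i ≤ j`, `extChain lam 0 = λ_{-1} = ⊥`, and
`extChain lam (j + 2) = λ_{j+1} = ⊤`. -/
def extChain {n j : ℕ} (lam : Fin (j + 1) → Setoid (Fin n)) : ℕ → Setoid (Fin n)
  | 0 => ⊥
  | t + 1 => if h : t < j + 1 then lam ⟨t, h⟩ else ⊤

open Equiv Equiv.Perm

theorem Subgroup.prime_dvd_relIndex_of_pow_eq_one {G : Type*} [Group G] {p : ℕ} [Fact p.Prime]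
    {H K : Subgroup G} (hK : K ≤ normalizer (H : Set G)) {g : G} (hgK : g ∈ K) (hgH : g ∉ H)
    (hg : g ^ p = 1) : p ∣ H.relIndex K := by
  have := normal_subgroupOf_of_le_normalizer hK
  let q : K ⧸ H.subgroupOf K := QuotientGroup.mk ⟨g, hgK⟩
  have hq : q ≠ 1 := by
    rwa [Ne, QuotientGroup.eq_one_iff, mem_subgroupOf]
  have hqp : q ^ p = 1 := by
    rw [← QuotientGroup.mk_pow, show (⟨g, hgK⟩ : K) ^ p = 1 from Subtype.ext hg,
      QuotientGroup.mk_one]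
  rw [relIndex, index, ← orderOf_eq_prime hqp hq]
  exact _root_.orderOf_dvd_natCard q

theorem Setoid.rel_iff_rel_apply_of_forall_rel_self {α : Type*} (r : Setoid α) {f : α → α}
    (hf : ∀ x, r.r (f x) x) (x y : α) : r.r x y ↔ r.r (f x) (f y) :=
  ⟨fun h => r.trans' (hf x) (r.trans' h (r.symm' (hf y))),
    fun h => r.trans' (r.symm' (hf x)) (r.trans' h (hf y))⟩

namespace Equiv.Perm

variable {α : Type*} {P : α → Prop} [DecidablePred P] {d : Perm α} (hd : ∀ x, P (d x) ↔ P x)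
include hd

theorem ofSubtype_subtypePerm_pow_eq_one {m : ℕ} (hm : d ^ m = 1) :
    ofSubtype (d.subtypePerm hd) ^ m = 1 := by
  rw [← map_pow, show d.subtypePerm hd ^ m = 1 from Equiv.ext fun x => Subtype.ext (by simp [hm]),
    map_one]

theorem commute_ofSubtype_subtypePerm {g : Perm α} (hgd : Commute g d)
    (hg : ∀ x, P (g x) ↔ P x) : Commute g (ofSubtype (d.subtypePerm hd)) := by
  ext x
  by_cases hx : P x
  · have hgx : P (g x) := (hg x).2 hx
    simp only [Perm.mul_apply, ofSubtype_subtypePerm_of_mem hd hx,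
      ofSubtype_subtypePerm_of_mem hd hgx]
    exact congrArg (· x) hgd.eq
  · have hgx : ¬ P (g x) := fun h => hx ((hg x).1 h)
    simp only [Perm.mul_apply, ofSubtype_subtypePerm_of_not_mem hd hx,
      ofSubtype_subtypePerm_of_not_mem hd hgx]

theorem rel_iff_rel_ofSubtype_subtypePerm (r : Setoid α)
    (hdr : ∀ x y, r.r x y ↔ r.r (d x) (d y)) (hP : ∀ x y, r.r x y → P x → P y) (x y : α) :
    r.r x y ↔ r.r (ofSubtype (d.subtypePerm hd) x) (ofSubtype (d.subtypePerm hd) y) := by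
  have hP' : ∀ x y, r.r x y → (P x ↔ P y) := fun x y h => ⟨hP x y h, hP y x (r.symm' h)⟩
  by_cases hx : P x <;> by_cases hy : P y
  · simp only [ofSubtype_subtypePerm_of_mem hd hx, ofSubtype_subtypePerm_of_mem hd hy]
    exact hdr x y
  · simp only [ofSubtype_subtypePerm_of_mem hd hx, ofSubtype_subtypePerm_of_not_mem hd hy]
    exact iff_of_false (fun h => hy ((hP' x y h).1 hx))
      (fun h => hy ((hP' _ y h).1 ((hd x).2 hx)))
  · simp only [ofSubtype_subtypePerm_of_not_mem hd hx, ofSubtype_subtypePerm_of_mem hd hy]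
    exact iff_of_false (fun h => hx ((hP' x y h).2 hy))
      (fun h => hx ((hP' x _ h).2 ((hd y).2 hy)))
  · simp only [ofSubtype_subtypePerm_of_not_mem hd hx, ofSubtype_subtypePerm_of_not_mem hd hy]

theorem rel_ofSubtype_subtypePerm_self (r : Setoid α) (hdr : ∀ x, r.r (d x) x) (x : α) :
    r.r (ofSubtype (d.subtypePerm hd) x) x := by
  by_cases hx : P x
  · rw [ofSubtype_subtypePerm_of_mem hd hx]
    exact hdr x
  · rw [ofSubtype_subtypePerm_of_not_mem hd hx]

end Equiv.Perm

theorem Subgroup.exists_invariant_saturated_of_not_rel {α : Type*} (D : Subgroup (Perm α))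
    (μ : Setoid α) (hμ : ∀ g ∈ D, ∀ x y, μ.r x y ↔ μ.r (g x) (g y)) {x₀ y₀ : α}
    (h : ∀ g ∈ D, ¬ μ.r (g x₀) y₀) :
    ∃ X : α → Prop, X x₀ ∧ ¬ X y₀ ∧ (∀ g ∈ D, ∀ x, X (g x) ↔ X x) ∧
      ∀ x y, μ.r x y → X x → X y := by
  refine ⟨fun z => ∃ g ∈ D, μ.r (g x₀) z, ⟨1, D.one_mem, μ.refl' x₀⟩,
    fun ⟨g, hg, hr⟩ => h g hg hr, ?_, fun x y hxy ⟨g, hg, hr⟩ => ⟨g, hg, μ.trans' hr hxy⟩⟩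
  have hfwd : ∀ g ∈ D, ∀ x, (∃ f ∈ D, μ.r (f x₀) x) → ∃ f ∈ D, μ.r (f x₀) (g x) :=
    fun g hg x ⟨f, hf, hr⟩ => ⟨g * f, D.mul_mem hg hf, (hμ g hg _ _).1 hr⟩
  refine fun g hg x => ⟨fun hx => ?_, hfwd g hg x⟩
  simpa using hfwd g⁻¹ (D.inv_mem hg) (g x) hx

section extChain

variable {n j : ℕ} (lam : Fin (j + 1) → Setoid (Fin n))

theorem extChain_succ (t : Fin (j + 1)) : extChain lam (t + 1) = lam t := by
  simp [extChain, t.isLt]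

theorem extChain_monotone (hlam : Monotone lam) : Monotone (extChain lam) := by
  refine monotone_nat_of_le_succ fun t => ?_
  rcases t with _ | t
  · exact bot_le
  · by_cases ht : t + 1 < j + 1
    · simp only [extChain, ht, Nat.lt_of_succ_lt ht, dite_true]
      exact hlam (Fin.mk_le_mk.2 t.le_succ)
    · simp only [extChain, ht, dite_false]
      split <;> exact le_top

theorem rel_iff_rel_apply_extChain {g : Perm (Fin n)}
    (hg : ∀ (t : Fin (j + 1)) (x y : Fin n), (lam t).r x y ↔ (lam t).r (g x) (g y)) (i : ℕ)
    (x y : Fin n) : (extChain lam i).r x y ↔ (extChain lam i).r (g x) (g y) := by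
  rcases i with _ | i
  · exact g.injective.eq_iff.symm
  · by_cases hi : i < j + 1
    · rw [show extChain lam (i + 1) = lam ⟨i, hi⟩ from extChain_succ lam ⟨i, hi⟩]
      exact hg _ x y
    · rw [show extChain lam (i + 1) = ⊤ by simp [extChain, hi]]
      exact iff_of_true trivial trivial

end extChain

theorem stmt12_general (p n j : ℕ) (hp : p.Prime)
    (lam : Fin (j + 1) → Setoid (Fin n)) (hmono : StrictMono lam)
    (K : Subgroup (Equiv.Perm (Fin n)))
    (hK : ∀ g, g ∈ K ↔ ∀ (t : Fin (j + 1)) (x y : Fin n),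
      (lam t).r x y ↔ (lam t).r (g x) (g y))
    (D : Subgroup (Equiv.Perm (Fin n))) (hDK : D ≤ K)
    (hab : ∀ a ∈ D, ∀ b ∈ D, a * b = b * a)
    (hexp : ∀ d ∈ D, d ^ p = 1)
    (hfree : ∀ d ∈ D, d ≠ 1 → ∀ x : Fin n, d x ≠ x)
    (i : ℕ)
    (hntrans : ¬ ∀ x y : Fin n, ∃ d ∈ D, (extChain lam i).r (d x) y)
    (hd : ∃ d ∈ D, d ≠ 1 ∧ ∀ x : Fin n, (extChain lam (i + 1)).r (d x) x) :
    p ∣ D.relIndex (Subgroup.centralizer (D : Set (Equiv.Perm (Fin n))) ⊓ K) := by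
  classical
  have := Fact.mk hp
  obtain ⟨d, hdD, hd1, hdfix⟩ := hd
  push Not at hntrans
  obtain ⟨x₀, y₀, hsep⟩ := hntrans
  obtain ⟨X, hx₀, hy₀, hXD, hXsat⟩ := D.exists_invariant_saturated_of_not_rel (extChain lam i)
    (fun g hg => rel_iff_rel_apply_extChain lam ((hK g).1 (hDK hg)) i) hsep
  set c := ofSubtype (d.subtypePerm (hXD d hdD))
  have hcK : c ∈ K := by
    refine (hK c).2 fun t => ?_
    rcases lt_or_ge (t : ℕ) i with ht | ht
    · have hle : lam t ≤ extChain lam i :=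
        extChain_succ lam t ▸ extChain_monotone lam hmono.monotone ht
      exact rel_iff_rel_ofSubtype_subtypePerm _ (lam t) ((hK d).1 (hDK hdD) t)
        fun x y hxy => hXsat x y (hle hxy)
    · have hle : extChain lam (i + 1) ≤ lam t :=
        extChain_succ lam t ▸ extChain_monotone lam hmono.monotone (Nat.succ_le_succ ht)
      exact (lam t).rel_iff_rel_apply_of_forall_rel_self
        (rel_ofSubtype_subtypePerm_self _ (lam t) fun x => hle (hdfix x))
  have hcC : c ∈ Subgroup.centralizer (D : Set (Equiv.Perm (Fin n))) :=
    Subgroup.mem_centralizer_iff.2 fun g hg =>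
      commute_ofSubtype_subtypePerm _ (hab g hg d hdD) (hXD g hg)
  have hcD : c ∉ D := fun hc => by
    have hc1 : c = 1 := by_contra fun h =>
      hfree c hc h y₀ (ofSubtype_subtypePerm_of_not_mem _ hy₀)
    have hcx₀ : c x₀ = d x₀ := ofSubtype_subtypePerm_of_mem _ hx₀
    exact hfree d hdD hd1 x₀ (by rw [← hcx₀, hc1, Perm.one_apply])
  exact Subgroup.prime_dvd_relIndex_of_pow_eq_one
    (inf_le_left.trans (Subgroup.centralizer_le_normalizer _)) ⟨hcC, hcK⟩ hcD
    (ofSubtype_subtypePerm_pow_eq_one _ (hexp d hdD))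

/-- Let `λ_0 < … < λ_j` be a chain of proper nontrivial setoids on
`Fin n` with stabilizer `K ≤ Σ_n`, let `D ≤ K` be an elementary abelian `p`-subgroup
acting freely on `Fin n`, and suppose for some `i ≤ j + 1` (with `λ_{-1} = ⊥`,
`λ_{j+1} = ⊤`): `D` acts transitively on the `λ_i`-classes, not transitively on the
`λ_{i-1}`-classes, and some non-identity `d ∈ D` fixes every `λ_i`-class.  Then `p`
divides the index `[C : D]`, where `C` is the centralizer of `D` in `K`. -/
theorem stmt12 (p n j : ℕ) (hp : p.Prime)
    (lam : Fin (j + 1) → Setoid (Fin n)) (hmono : StrictMono lam)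
    (hproper : ∀ t, ⊥ < lam t ∧ lam t < ⊤)
    (K : Subgroup (Equiv.Perm (Fin n)))
    (hK : ∀ g, g ∈ K ↔ ∀ (t : Fin (j + 1)) (x y : Fin n),
      (lam t).r x y ↔ (lam t).r (g x) (g y))
    (D : Subgroup (Equiv.Perm (Fin n))) (hDK : D ≤ K)
    (hab : ∀ a ∈ D, ∀ b ∈ D, a * b = b * a)
    (hexp : ∀ d ∈ D, d ^ p = 1)
    (hfree : ∀ d ∈ D, d ≠ 1 → ∀ x : Fin n, d x ≠ x)
    (i : ℕ) (hi : i ≤ j + 1)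
    (htrans : ∀ x y : Fin n, ∃ d ∈ D, (extChain lam (i + 1)).r (d x) y)
    (hntrans : ¬ ∀ x y : Fin n, ∃ d ∈ D, (extChain lam i).r (d x) y)
    (hd : ∃ d ∈ D, d ≠ 1 ∧ ∀ x : Fin n, (extChain lam (i + 1)).r (d x) x) :
    p ∣ D.relIndex (Subgroup.centralizer (D : Set (Equiv.Perm (Fin n))) ⊓ K) :=
  stmt12_general p n j hp lam hmono K hK D hDK hab hexp hfree i hntrans hd
end

section
/- Let p be a prime and n a natural number. Let λ_0 < λ_1 < … < λ_j be a strictly increasing chain of proper nontrivial setoids on Fin n and let K ≤ Σ_n be its stabilizer; set λ_{j+1} = ⊤. Let D ≤ K be an elementary abelian p-subgroup acting freely on Fin n and not transitively on Fin n. Suppose that for some index i with 0 ≤ i ≤ j+1, D acts transitively on the set of λ_i-classes and no non-identity element d of D satisfies d x ∼_{λ_i} x for all x. Then there exists τ in the centralizer C of D in K with τ ∉ D, τ ≠ 1, τ² = 1, and τ a product of |D| disjoint transpositions; in particular the support {x : τ x ≠ x} has exactly 2·|D| elements. -/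
namespace MulAction

variable {G α : Type*} [Group G] [MulAction G α]

theorem disjoint_orbit_of_notMem {a b : α} (hab : b ∉ orbit G a) :
    Disjoint (orbit G a) (orbit G b) :=
  (orbit.eq_or_disjoint a b).resolve_left fun h => hab (h ▸ mem_orbit_self b)

variable (G) in
open Classical in
noncomputable def orbitSwapFun (a b z : α) : α :=
  if h : z ∈ orbit G a then (mem_orbit_iff.mp h).choose • b
  else if h : z ∈ orbit G b then (mem_orbit_iff.mp h).choose • a
  else z

variable {a b : α}

theorem orbitSwapFun_of_notMem {z : α} (hza : z ∉ orbit G a) (hzb : z ∉ orbit G b) :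
    orbitSwapFun G a b z = z := by
  rw [orbitSwapFun, dif_neg hza, dif_neg hzb]

section
variable [IsCancelSMul G α]

theorem orbitSwapFun_smul_left (g : G) : orbitSwapFun G a b (g • a) = g • b := by
  have h : g • a ∈ orbit G a := mem_orbit a g
  rw [orbitSwapFun, dif_pos h, IsCancelSMul.right_cancel _ _ _ (mem_orbit_iff.mp h).choose_spec]

theorem orbitSwapFun_smul_right (hab : b ∉ orbit G a) (g : G) :
    orbitSwapFun G a b (g • b) = g • a := by
  have h : g • b ∈ orbit G b := mem_orbit b g
  have h' : g • b ∉ orbit G a := (disjoint_orbit_of_notMem hab).notMem_of_mem_right h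
  rw [orbitSwapFun, dif_neg h', dif_pos h,
    IsCancelSMul.right_cancel _ _ _ (mem_orbit_iff.mp h).choose_spec]

theorem involutive_orbitSwapFun (hab : b ∉ orbit G a) :
    Function.Involutive (orbitSwapFun G a b) := by
  intro z
  by_cases hza : z ∈ orbit G a
  · obtain ⟨g, rfl⟩ := hza
    rw [orbitSwapFun_smul_left, orbitSwapFun_smul_right hab]
  by_cases hzb : z ∈ orbit G b
  · obtain ⟨g, rfl⟩ := hzb
    rw [orbitSwapFun_smul_right hab, orbitSwapFun_smul_left]
  rw [orbitSwapFun_of_notMem hza hzb, orbitSwapFun_of_notMem hza hzb]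

noncomputable def orbitSwap (hab : b ∉ orbit G a) : Equiv.Perm α :=
  (involutive_orbitSwapFun hab).toPerm _

section
variable {hab : b ∉ orbit G a}

theorem orbitSwap_apply (z : α) : orbitSwap hab z = orbitSwapFun G a b z :=
  rfl

theorem orbitSwap_apply_left : orbitSwap hab a = b := by
  simpa [orbitSwap_apply] using orbitSwapFun_smul_left (b := b) (1 : G)

theorem orbitSwap_smul (g : G) (z : α) :
    orbitSwap hab (g • z) = g • orbitSwap hab z := by
  simp only [orbitSwap_apply]
  by_cases hza : z ∈ orbit G a
  · obtain ⟨h, rfl⟩ := hza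
    rw [smul_smul, orbitSwapFun_smul_left, orbitSwapFun_smul_left, mul_smul]
  by_cases hzb : z ∈ orbit G b
  · obtain ⟨h, rfl⟩ := hzb
    rw [smul_smul, orbitSwapFun_smul_right hab, orbitSwapFun_smul_right hab, mul_smul]
  rw [orbitSwapFun_of_notMem hza hzb, orbitSwapFun_of_notMem] <;>
    rwa [← orbit_eq_iff, orbit_smul, orbit_eq_iff]

theorem orbitSwap_sq : orbitSwap hab ^ 2 = 1 :=
  Equiv.ext (involutive_orbitSwapFun hab)

theorem card_support_orbitSwap [Fintype α] [DecidableEq α] :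
    (orbitSwap hab).support.card = 2 * Nat.card G := by
  have hba : b ≠ a := fun h => hab (h ▸ mem_orbit_self b)
  have hsupp : ((orbitSwap hab).support : Set α) = orbit G a ∪ orbit G b := by
    ext z
    rw [Finset.mem_coe, Equiv.Perm.mem_support, orbitSwap_apply]
    constructor
    · intro hz
      by_contra h
      rw [Set.mem_union, not_or] at h
      exact hz (orbitSwapFun_of_notMem h.1 h.2)
    · rintro (⟨g, rfl⟩ | ⟨g, rfl⟩)
      · rw [orbitSwapFun_smul_left, Ne, smul_left_cancel_iff]
        exact hba
      · rw [orbitSwapFun_smul_right hab, Ne, smul_left_cancel_iff]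
        exact hba.symm
  rw [← Set.ncard_coe_finset, hsupp, Set.ncard_union_eq (disjoint_orbit_of_notMem hab),
    orbit, orbit, Set.ncard_range_of_injective (IsCancelSMul.right_cancel · · a),
    Set.ncard_range_of_injective (IsCancelSMul.right_cancel · · b), two_mul]

theorem orbitSwap_rel_self {r : Setoid α} (hr : ∀ (g : G) x y, r x y → r (g • x) (g • y))
    (hrel : r a b) (z : α) : r (orbitSwap hab z) z := by
  rw [orbitSwap_apply]
  by_cases hza : z ∈ orbit G a
  · obtain ⟨g, rfl⟩ := hza
    rw [orbitSwapFun_smul_left]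
    exact r.symm' (hr g a b hrel)
  by_cases hzb : z ∈ orbit G b
  · obtain ⟨g, rfl⟩ := hzb
    rw [orbitSwapFun_smul_right hab]
    exact hr g a b hrel
  rw [orbitSwapFun_of_notMem hza hzb]

end

end

theorem eq_one_of_rel_smul_self {r : Setoid α}
    (hr : ∀ (g : G) x y, r x y → r (g • x) (g • y)) (hcomm : ∀ g h : G, g * h = h * g)
    (htrans : ∀ x y, ∃ g : G, r (g • x) y) (hS : ∀ g : G, (∀ x, r (g • x) x) → g = 1)
    {g : G} {u : α} (hgu : r (g • u) u) : g = 1 := by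
  refine hS g fun x => ?_
  obtain ⟨e, he⟩ := htrans u x
  have hge : g • e • u = e • g • u := by rw [smul_smul, hcomm, mul_smul]
  exact r.trans' (hge ▸ hr g _ _ (r.symm' he)) (r.trans' (hr e _ _ hgu) he)

end MulAction

namespace Setoid

variable {α : Type*}

theorem exists_ne_rel_of_bot_lt {r : Setoid α} (h : ⊥ < r) : ∃ x y, x ≠ y ∧ r x y := by
  by_contra! hne
  exact h.ne' (le_bot_iff.mp fun x y hxy => not_not.mp fun hxy' => hne x y hxy' hxy)

theorem rel_iff_rel_apply_of_rel_apply_self {r : Setoid α} {f : α → α}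
    (hf : ∀ z, r (f z) z) (x y : α) : r x y ↔ r (f x) (f y) :=
  ⟨fun h => r.trans' (hf x) (r.trans' h (r.symm' (hf y))),
    fun h => r.trans' (r.symm' (hf x)) (r.trans' h (hf y))⟩

end Setoid

section extChain

variable {n j : ℕ} {lam : Fin (j + 1) → Setoid (Fin n)}

theorem extChain_succ_s13 (s : ℕ) :
    extChain lam (s + 1) = if h : s < j + 1 then lam ⟨s, h⟩ else ⊤ :=
  rfl

theorem le_extChain_succ (hm : Monotone lam) (s : ℕ) : lam 0 ≤ extChain lam (s + 1) := by
  rw [extChain_succ_s13]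
  split_ifs
  · exact hm (Fin.zero_le _)
  · exact le_top

theorem extChain_rel_apply {f : Fin n → Fin n} (hf : ∀ t x y, lam t x y → lam t (f x) (f y))
    (s : ℕ) {x y : Fin n} (h : extChain lam s x y) : extChain lam s (f x) (f y) := by
  cases s with
  | zero => exact congrArg f h
  | succ s =>
    by_cases hs : s < j + 1
    · rw [extChain_succ_s13, dif_pos hs] at h ⊢
      exact hf _ x y h
    · rw [extChain_succ_s13, dif_neg hs]
      trivial

end extChain

theorem stmt13_general (n j : ℕ)
    (lam : Fin (j + 1) → Setoid (Fin n)) (hmono : StrictMono lam)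
    (hproper : ∀ t, ⊥ < lam t ∧ lam t < ⊤)
    (K : Subgroup (Equiv.Perm (Fin n)))
    (hK : ∀ g, g ∈ K ↔ ∀ (t : Fin (j + 1)) (x y : Fin n),
      (lam t).r x y ↔ (lam t).r (g x) (g y))
    (D : Subgroup (Equiv.Perm (Fin n))) (hDK : D ≤ K)
    (hab : ∀ a ∈ D, ∀ b ∈ D, a * b = b * a)
    (i : ℕ)
    (htrans : ∀ x y : Fin n, ∃ d ∈ D, (extChain lam (i + 1)).r (d x) y)
    (hS : ∀ d ∈ D, (∀ x : Fin n, (extChain lam (i + 1)).r (d x) x) → d = 1) :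
    ∃ τ ∈ Subgroup.centralizer (D : Set (Equiv.Perm (Fin n))) ⊓ K,
      τ ∉ D ∧ τ ≠ 1 ∧ τ ^ 2 = 1 ∧
      (Equiv.Perm.support τ).card = 2 * Nat.card D := by
  have hDlam (t : Fin (j + 1)) (d : D) (x y : Fin n) (h : lam t x y) : lam t (d • x) (d • y) :=
    ((hK d).mp (hDK d.2) t x y).mp h
  have hfreeΛ (d : D) (u : Fin n) (h : extChain lam (i + 1) (d • u) u) : d = 1 :=
    MulAction.eq_one_of_rel_smul_self (fun d _ _ => extChain_rel_apply (hDlam · d) (i + 1))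
      (fun a b : D => Subtype.ext (hab a a.2 b b.2))
      (fun x y => let ⟨d, hd, h⟩ := htrans x y; ⟨⟨d, hd⟩, h⟩)
      (fun d h => Subtype.ext (hS d d.2 h)) h
  have : IsCancelSMul D (Fin n) := isCancelSMul_iff_eq_one_of_smul_eq.mpr
    fun d u h => hfreeΛ d u (by rw [h])
  obtain ⟨a, b, hne, hrel⟩ := Setoid.exists_ne_rel_of_bot_lt (hproper 0).1
  have horb : b ∉ MulAction.orbit D a := by
    intro hb
    obtain ⟨d, rfl⟩ := MulAction.mem_orbit_iff.mp hb
    have hd := hfreeΛ d a (Setoid.symm' _ (le_extChain_succ hmono.monotone i hrel))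
    exact hne (by rw [hd, one_smul])
  set τ := MulAction.orbitSwap horb
  have hτK : τ ∈ K := (hK τ).mpr fun t => Setoid.rel_iff_rel_apply_of_rel_apply_self
    fun z => hmono.monotone (Fin.zero_le t) (MulAction.orbitSwap_rel_self (hDlam 0) hrel z)
  have hτC : τ ∈ Subgroup.centralizer (D : Set (Equiv.Perm (Fin n))) :=
    Subgroup.mem_centralizer_iff.mpr fun d hd =>
      Equiv.ext fun z => (MulAction.orbitSwap_smul (⟨d, hd⟩ : D) z).symm
  have hτa : τ a = b := MulAction.orbitSwap_apply_left
  refine ⟨τ, ⟨hτC, hτK⟩, fun hτ => horb ⟨⟨τ, hτ⟩, hτa⟩, fun hτ => hne ?_,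
    MulAction.orbitSwap_sq, MulAction.card_support_orbitSwap⟩
  rw [← hτa, hτ, Equiv.Perm.one_apply]

/-- Let `λ_0 < … < λ_j` be a chain of proper nontrivial setoids on
`Fin n` with stabilizer `K ≤ Σ_n` (and `λ_{j+1} = ⊤`), and let `D ≤ K` be an elementary
abelian `p`-subgroup acting freely and not transitively on `Fin n`.  If for some
`i ≤ j + 1` the group `D` acts transitively on the `λ_i`-classes and no non-identity
element of `D` fixes every `λ_i`-class, then the centralizer `C` of `D` in `K` contains
an involution `τ ∉ D` which is a product of `|D|` disjoint transpositions; in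
particular its support has exactly `2·|D|` elements. -/
theorem stmt13 (p n j : ℕ) (hp : p.Prime)
    (lam : Fin (j + 1) → Setoid (Fin n)) (hmono : StrictMono lam)
    (hproper : ∀ t, ⊥ < lam t ∧ lam t < ⊤)
    (K : Subgroup (Equiv.Perm (Fin n)))
    (hK : ∀ g, g ∈ K ↔ ∀ (t : Fin (j + 1)) (x y : Fin n),
      (lam t).r x y ↔ (lam t).r (g x) (g y))
    (D : Subgroup (Equiv.Perm (Fin n))) (hDK : D ≤ K)
    (hab : ∀ a ∈ D, ∀ b ∈ D, a * b = b * a)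
    (hexp : ∀ d ∈ D, d ^ p = 1)
    (hfree : ∀ d ∈ D, d ≠ 1 → ∀ x : Fin n, d x ≠ x)
    (hntrans : ¬ ∀ x y : Fin n, ∃ d ∈ D, d x = y)
    (i : ℕ) (hi : i ≤ j + 1)
    (htrans : ∀ x y : Fin n, ∃ d ∈ D, (extChain lam (i + 1)).r (d x) y)
    (hS : ∀ d ∈ D, (∀ x : Fin n, (extChain lam (i + 1)).r (d x) x) → d = 1) :
    ∃ τ ∈ Subgroup.centralizer (D : Set (Equiv.Perm (Fin n))) ⊓ K,
      τ ∉ D ∧ τ ≠ 1 ∧ τ ^ 2 = 1 ∧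
      (Equiv.Perm.support τ).card = 2 * Nat.card D :=
  stmt13_general n j lam hmono hproper K hK D hDK hab i htrans hS
end

section
/- Let p be a prime and n a natural number. Let λ_0 < λ_1 < … < λ_j be a strictly increasing chain of proper nontrivial setoids on Fin n with stabilizer K ≤ Σ_n; set λ_{j+1} = ⊤. Let D ≤ K be an elementary abelian p-subgroup acting freely on Fin n, and let i with 0 ≤ i ≤ j+1 be such that D acts transitively on the set of λ_i-classes and no non-identity element of D maps every λ_i-class to itself. Fix a ∈ Fin n and let J = {σ ∈ K : σ x = x for every x with ¬(x ∼_{λ_i} a)}, a subgroup of K. For σ ∈ J the conjugates d σ d⁻¹ for d ∈ D commute pairwise, so f(σ) := ∏_{d ∈ D} d σ d⁻¹ is a well-defined element of Σ_n. Then f : J → Σ_n is an injective group homomorphism, for every σ ∈ J the element f(σ) lies in K and commutes with every element of D, and f(σ) ∈ D implies σ = 1 (i.e., f(J) ∩ D = {1}). -/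
open Equiv Finset

theorem Equiv.Perm.noncommProd_apply_of_forall_ne {ι α : Type*} {s : Finset ι} {g : ι → Perm α}
    (comm : (s : Set ι).Pairwise (Function.onFun Commute g)) {i : ι} (hi : i ∈ s) {x : α}
    (hfix : ∀ j ∈ s, j ≠ i → g j (g i x) = g i x) :
    s.noncommProd g comm x = g i x := by
  classical
  rw [← s.noncommProd_erase_mul hi, Perm.mul_apply]
  exact (MulAction.stabilizer (Perm α) (g i x)).noncommProd_mem _
    fun j hj => hfix j (mem_of_mem_erase hj) (ne_of_mem_erase hj)

theorem extChain_map_rel_iff {n j : ℕ} {lam : Fin (j + 1) → Setoid (Fin n)} {g : Perm (Fin n)}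
    (hg : ∀ t x y, (lam t).r x y ↔ (lam t).r (g x) (g y)) (k : ℕ) (x y : Fin n) :
    (extChain lam k).r (g x) (g y) ↔ (extChain lam k).r x y := by
  cases k with
  | zero => exact g.injective.eq_iff
  | succ k =>
    by_cases hk : k < j + 1
    · rw [show extChain lam (k + 1) = lam ⟨k, hk⟩ from dif_pos hk]
      exact (hg _ x y).symm
    · rw [show extChain lam (k + 1) = ⊤ from dif_neg hk]
      exact iff_of_true trivial trivial

namespace Setoid

variable {α : Type*} {L : Setoid α}

def IsSupportedInClass (L : Setoid α) (a : α) (σ : Perm α) : Prop :=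
  ∀ x, ¬ L.r x a → σ x = x

namespace IsSupportedInClass

variable {a b : α} {σ τ : Perm α}

theorem rel_apply (hσ : L.IsSupportedInClass a σ) {x : α} (hx : L.r x a) : L.r (σ x) a := by
  by_contra h
  rw [σ.injective (hσ _ h)] at h
  exact h hx

theorem mul (hσ : L.IsSupportedInClass a σ) (hτ : L.IsSupportedInClass a τ) :
    L.IsSupportedInClass a (σ * τ) := fun x hx => by
  rw [Perm.mul_apply, hτ x hx, hσ x hx]

theorem conj (hσ : L.IsSupportedInClass a σ) {d : Perm α}
    (hd : ∀ x y, L.r (d x) (d y) ↔ L.r x y) :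
    L.IsSupportedInClass (d a) (d * σ * d⁻¹) := fun x hx => by
  have : ¬ L.r (d⁻¹ x) a := by rwa [← hd, Perm.coe_inv, apply_symm_apply]
  rw [Perm.mul_apply, Perm.mul_apply, hσ _ this]
  exact d.apply_symm_apply x

theorem commute (hσ : L.IsSupportedInClass a σ) (hτ : L.IsSupportedInClass b τ)
    (hab : ¬ L.r a b) : Commute σ τ := by
  refine Perm.Disjoint.commute fun x => ?_
  by_contra! h
  exact hab (L.trans (L.symm (not_imp_comm.mp (hσ x) h.1)) (not_imp_comm.mp (hτ x) h.2))

end IsSupportedInClass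

end Setoid

namespace Subgroup

variable {α : Type*}

structure ActsRegularlyOnClasses (D : Subgroup (Perm α)) (L : Setoid α) : Prop where
  map_rel_iff : ∀ d ∈ D, ∀ x y, L.r (d x) (d y) ↔ L.r x y
  exists_rel : ∀ x y, ∃ d ∈ D, L.r (d x) y
  eq_one_of_rel : ∀ d ∈ D, ∀ x, L.r (d x) x → d = 1

namespace ActsRegularlyOnClasses

variable {D : Subgroup (Perm α)} {L : Setoid α}

/-- For commutative `D`, fixing one class already forces fixing all of them. -/
theorem of_commute (hmap : ∀ d ∈ D, ∀ x y, L.r (d x) (d y) ↔ L.r x y)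
    (hcomm : ∀ d₁ ∈ D, ∀ d₂ ∈ D, d₁ * d₂ = d₂ * d₁)
    (htrans : ∀ x y, ∃ d ∈ D, L.r (d x) y)
    (hfix : ∀ d ∈ D, (∀ x, L.r (d x) x) → d = 1) :
    D.ActsRegularlyOnClasses L := by
  refine ⟨hmap, htrans, fun d hd x₀ hx₀ => hfix d hd fun y => ?_⟩
  obtain ⟨e, he, hey⟩ := htrans x₀ y
  have hde : d (e x₀) = e (d x₀) := congrArg (· x₀) (hcomm d hd e he)
  have hmoved : L.r (d (e x₀)) (e x₀) := by rw [hde, hmap e he]; exact hx₀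
  exact L.trans (L.trans (L.symm ((hmap d hd _ _).mpr hey)) hmoved) hey

variable {a : α} {σ : Perm α}

theorem eq_of_rel (hR : D.ActsRegularlyOnClasses L) {d₁ d₂ : Perm α} (hd₁ : d₁ ∈ D)
    (hd₂ : d₂ ∈ D) {x : α} (h : L.r (d₁ x) (d₂ x)) : d₁ = d₂ := by
  have : L.r ((d₂⁻¹ * d₁) x) x := by
    rwa [← hR.map_rel_iff d₂ hd₂, Perm.mul_apply, Perm.coe_inv, apply_symm_apply]
  exact (inv_mul_eq_one.mp (hR.eq_one_of_rel _ (mul_mem (inv_mem hd₂) hd₁) x this)).symm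

theorem isSupportedInClass_conj (hR : D.ActsRegularlyOnClasses L)
    (hσ : L.IsSupportedInClass a σ) {d : Perm α} (hd : d ∈ D) :
    L.IsSupportedInClass (d a) (d * σ * d⁻¹) :=
  hσ.conj (hR.map_rel_iff d hd)

theorem commute_conj (hR : D.ActsRegularlyOnClasses L) (hσ : L.IsSupportedInClass a σ)
    {d₁ d₂ : Perm α} (hd₁ : d₁ ∈ D) (hd₂ : d₂ ∈ D) :
    Commute (d₁ * σ * d₁⁻¹) (d₂ * σ * d₂⁻¹) := by
  rcases eq_or_ne d₁ d₂ with rfl | hne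
  · exact Commute.refl _
  · exact (hR.isSupportedInClass_conj hσ hd₁).commute (hR.isSupportedInClass_conj hσ hd₂)
      fun h => hne (hR.eq_of_rel hd₁ hd₂ h)

variable [Fintype D]

noncomputable def conjProd (hR : D.ActsRegularlyOnClasses L) (hσ : L.IsSupportedInClass a σ) :
    Perm α :=
  (univ : Finset D).noncommProd (fun d : D => (d : Perm α) * σ * (d : Perm α)⁻¹)
    fun d₁ _ d₂ _ _ => hR.commute_conj hσ d₁.2 d₂.2

theorem conjProd_apply (hR : D.ActsRegularlyOnClasses L) (hσ : L.IsSupportedInClass a σ)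
    {d : Perm α} (hd : d ∈ D) {x : α} (hx : L.r (d a) x) :
    hR.conjProd hσ x = (d * σ * d⁻¹) x := by
  refine Perm.noncommProd_apply_of_forall_ne (i := (⟨d, hd⟩ : D)) _ (mem_univ _)
    fun e _ hne => hR.isSupportedInClass_conj hσ e.2 _ fun h => hne (Subtype.ext ?_)
  refine hR.eq_of_rel (x := a) e.2 hd ?_
  exact L.trans (L.symm h) ((hR.isSupportedInClass_conj hσ hd).rel_apply (L.symm hx))

theorem exists_conjProd_apply (hR : D.ActsRegularlyOnClasses L) (hσ : L.IsSupportedInClass a σ)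
    (x : α) : ∃ d ∈ D, L.r (d a) x ∧ hR.conjProd hσ x = (d * σ * d⁻¹) x := by
  obtain ⟨d, hd, hx⟩ := hR.exists_rel a x
  exact ⟨d, hd, hx, hR.conjProd_apply hσ hd hx⟩

theorem conjProd_mul (hR : D.ActsRegularlyOnClasses L) {τ : Perm α}
    (hσ : L.IsSupportedInClass a σ) (hτ : L.IsSupportedInClass a τ) :
    hR.conjProd (hσ.mul hτ) = hR.conjProd hσ * hR.conjProd hτ := by
  ext x
  obtain ⟨d, hd, hx, hτx⟩ := hR.exists_conjProd_apply hτ x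
  have hy : L.r (d a) ((d * τ * d⁻¹) x) :=
    L.symm ((hR.isSupportedInClass_conj hτ hd).rel_apply (L.symm hx))
  rw [Perm.mul_apply, hτx, hR.conjProd_apply hσ hd hy, hR.conjProd_apply _ hd hx]
  simp only [Perm.mul_apply, Perm.coe_inv, symm_apply_apply]

theorem conjProd_rel_self (hR : D.ActsRegularlyOnClasses L) (hσ : L.IsSupportedInClass a σ)
    (x : α) : L.r (hR.conjProd hσ x) x := by
  obtain ⟨d, hd, hx, hσx⟩ := hR.exists_conjProd_apply hσ x
  rw [hσx]
  exact L.trans ((hR.isSupportedInClass_conj hσ hd).rel_apply (L.symm hx)) hx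

theorem eq_one_of_conjProd_eq_one (hR : D.ActsRegularlyOnClasses L)
    (hσ : L.IsSupportedInClass a σ) (h : hR.conjProd hσ = 1) : σ = 1 := by
  ext x
  by_cases hx : L.r x a
  · have := hR.conjProd_apply hσ (one_mem D) (L.symm hx)
    simpa [h] using this.symm
  · exact hσ x hx

theorem eq_one_of_conjProd_mem (hR : D.ActsRegularlyOnClasses L)
    (hσ : L.IsSupportedInClass a σ) (h : hR.conjProd hσ ∈ D) : σ = 1 :=
  hR.eq_one_of_conjProd_eq_one hσ (hR.eq_one_of_rel _ h a (hR.conjProd_rel_self hσ a))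

theorem commute_conjProd (hR : D.ActsRegularlyOnClasses L) (hσ : L.IsSupportedInClass a σ)
    {d : Perm α} (hd : d ∈ D) : Commute (hR.conjProd hσ) d := by
  ext x
  obtain ⟨e, he, hx, hσx⟩ := hR.exists_conjProd_apply hσ x
  have hdx : L.r ((d * e) a) (d x) := by rwa [Perm.mul_apply, hR.map_rel_iff d hd]
  rw [Perm.mul_apply, Perm.mul_apply, hR.conjProd_apply hσ (mul_mem hd he) hdx, hσx]
  simp only [Perm.mul_apply, mul_inv_rev, Perm.coe_inv, symm_apply_apply]

theorem conjProd_mem (hR : D.ActsRegularlyOnClasses L) (hσ : L.IsSupportedInClass a σ)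
    {K : Subgroup (Perm α)} (hDK : D ≤ K) (hσK : σ ∈ K) : hR.conjProd hσ ∈ K :=
  K.noncommProd_mem _ fun d _ => mul_mem (mul_mem (hDK d.2) hσK) (inv_mem (hDK d.2))

end ActsRegularlyOnClasses

end Subgroup

theorem stmt16_general (n j : ℕ)
    (lam : Fin (j + 1) → Setoid (Fin n))
    (K : Subgroup (Equiv.Perm (Fin n)))
    (hK : ∀ g, g ∈ K ↔ ∀ (t : Fin (j + 1)) (x y : Fin n),
      (lam t).r x y ↔ (lam t).r (g x) (g y))
    (D : Subgroup (Equiv.Perm (Fin n))) [Fintype D] (hDK : D ≤ K)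
    (hab : ∀ a ∈ D, ∀ b ∈ D, a * b = b * a)
    (i : ℕ)
    (htrans : ∀ x y : Fin n, ∃ d ∈ D, (extChain lam (i + 1)).r (d x) y)
    (hS : ∀ d ∈ D, (∀ x : Fin n, (extChain lam (i + 1)).r (d x) x) → d = 1)
    (a : Fin n)
    (J : Subgroup (Equiv.Perm (Fin n)))
    (hJ : ∀ σ, σ ∈ J ↔ σ ∈ K ∧
      ∀ x : Fin n, ¬ (extChain lam (i + 1)).r x a → σ x = x) :
    (∀ σ ∈ J, ∀ d₁ d₂ : D,
      Commute ((d₁ : Equiv.Perm (Fin n)) * σ * (d₁ : Equiv.Perm (Fin n))⁻¹)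
        ((d₂ : Equiv.Perm (Fin n)) * σ * (d₂ : Equiv.Perm (Fin n))⁻¹)) ∧
    ∃ f : J →* Equiv.Perm (Fin n),
      Function.Injective f ∧
      (∀ σ : J, f σ ∈ K) ∧
      (∀ σ : J, ∀ d ∈ D, Commute (f σ) d) ∧
      (∀ σ : J, f σ ∈ D → σ = 1) ∧
      (∀ (σ : J)
        (hc : ((Finset.univ : Finset D) : Set D).Pairwise fun d₁ d₂ =>
          Commute
            ((d₁ : Equiv.Perm (Fin n)) * (σ : Equiv.Perm (Fin n)) *
              (d₁ : Equiv.Perm (Fin n))⁻¹)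
            ((d₂ : Equiv.Perm (Fin n)) * (σ : Equiv.Perm (Fin n)) *
              (d₂ : Equiv.Perm (Fin n))⁻¹)),
        f σ = (Finset.univ : Finset D).noncommProd
          (fun d : D => (d : Equiv.Perm (Fin n)) * (σ : Equiv.Perm (Fin n)) *
            (d : Equiv.Perm (Fin n))⁻¹) hc) := by
  set L := extChain lam (i + 1)
  have hR : D.ActsRegularlyOnClasses L :=
    .of_commute (fun d hd => extChain_map_rel_iff ((hK d).mp (hDK hd)) _) hab htrans hS
  have hJL (σ : J) : L.IsSupportedInClass a σ := ((hJ σ).mp σ.2).2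
  let f : J →* Perm (Fin n) :=
    MonoidHom.mk' (fun σ => hR.conjProd (hJL σ)) fun σ τ => hR.conjProd_mul (hJL σ) (hJL τ)
  refine ⟨fun σ hσ d₁ d₂ => hR.commute_conj ((hJ σ).mp hσ).2 d₁.2 d₂.2, f, ?_,
    fun σ => hR.conjProd_mem (hJL σ) hDK ((hJ σ).mp σ.2).1,
    fun σ d hd => hR.commute_conjProd (hJL σ) hd,
    fun σ h => Subtype.ext (hR.eq_one_of_conjProd_mem (hJL σ) h), fun _ _ => rfl⟩
  exact (injective_iff_map_eq_one f).mpr fun σ h =>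
    Subtype.ext (hR.eq_one_of_conjProd_eq_one (hJL σ) h)

/-- In the situation of the chain `λ_0 < … < λ_j` with stabilizer
`K`, `D ≤ K` elementary abelian acting freely on `Fin n`, and `i ≤ j + 1` such that
`D` acts freely and transitively on the set of `λ_i`-classes: fixing `a : Fin n` and
letting `J = {σ ∈ K : σ x = x whenever ¬(x ∼_{λ_i} a)}`, the conjugates `d σ d⁻¹`
(`d ∈ D`) of any `σ ∈ J` commute pairwise, and `f(σ) = ∏_{d ∈ D} d σ d⁻¹` defines an
injective group homomorphism `f : J → Σ_n` whose values lie in `K`, centralize `D`,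
and meet `D` only at the identity. -/
theorem stmt16 (p n j : ℕ) (hp : p.Prime)
    (lam : Fin (j + 1) → Setoid (Fin n)) (hmono : StrictMono lam)
    (hproper : ∀ t, ⊥ < lam t ∧ lam t < ⊤)
    (K : Subgroup (Equiv.Perm (Fin n)))
    (hK : ∀ g, g ∈ K ↔ ∀ (t : Fin (j + 1)) (x y : Fin n),
      (lam t).r x y ↔ (lam t).r (g x) (g y))
    (D : Subgroup (Equiv.Perm (Fin n))) [Fintype D] (hDK : D ≤ K)
    (hab : ∀ a ∈ D, ∀ b ∈ D, a * b = b * a)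
    (hexp : ∀ d ∈ D, d ^ p = 1)
    (hfree : ∀ d ∈ D, d ≠ 1 → ∀ x : Fin n, d x ≠ x)
    (i : ℕ) (hi : i ≤ j + 1)
    (htrans : ∀ x y : Fin n, ∃ d ∈ D, (extChain lam (i + 1)).r (d x) y)
    (hS : ∀ d ∈ D, (∀ x : Fin n, (extChain lam (i + 1)).r (d x) x) → d = 1)
    (a : Fin n)
    (J : Subgroup (Equiv.Perm (Fin n)))
    (hJ : ∀ σ, σ ∈ J ↔ σ ∈ K ∧
      ∀ x : Fin n, ¬ (extChain lam (i + 1)).r x a → σ x = x) :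
    (∀ σ ∈ J, ∀ d₁ d₂ : D,
      Commute ((d₁ : Equiv.Perm (Fin n)) * σ * (d₁ : Equiv.Perm (Fin n))⁻¹)
        ((d₂ : Equiv.Perm (Fin n)) * σ * (d₂ : Equiv.Perm (Fin n))⁻¹)) ∧
    ∃ f : J →* Equiv.Perm (Fin n),
      Function.Injective f ∧
      (∀ σ : J, f σ ∈ K) ∧
      (∀ σ : J, ∀ d ∈ D, Commute (f σ) d) ∧
      (∀ σ : J, f σ ∈ D → σ = 1) ∧
      (∀ (σ : J)
        (hc : ((Finset.univ : Finset D) : Set D).Pairwise fun d₁ d₂ =>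
          Commute
            ((d₁ : Equiv.Perm (Fin n)) * (σ : Equiv.Perm (Fin n)) *
              (d₁ : Equiv.Perm (Fin n))⁻¹)
            ((d₂ : Equiv.Perm (Fin n)) * (σ : Equiv.Perm (Fin n)) *
              (d₂ : Equiv.Perm (Fin n))⁻¹)),
        f σ = (Finset.univ : Finset D).noncommProd
          (fun d : D => (d : Equiv.Perm (Fin n)) * (σ : Equiv.Perm (Fin n)) *
            (d : Equiv.Perm (Fin n))⁻¹) hc) :=
  stmt16_general n j lam K hK D hDK hab i htrans hS a J hJ
end
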